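/- arXiv:2505.08511 — 8 statements merged into one kernel-verified Lean document; each statement's English description precedes it below -/
import Mathlib

section
/- Discrete maximum principle for the upwind scheme with feedback boundary condition: assume that 0 < (Δt/Δx)·Λ_i(v) ≤ 1 for every v ∈ M_δ(0) and every i = 1,…,m, that 0 < κ_i ≤ 1 for every i, that |u^{(i),0}_{j,k}| ≤ δ for all i = 1,…,m, j = 1,…,M, k = 0,…,K, and that u^{(i),0}_{0,k} = κ_i·u^{(i),0}_{M,k}. Then the values produced by the scheme satisfy |u^{(i),n}_{j,k}| ≤ δ for all i = 1,…,m, j = 0,…,M, k = 0,…,K and all n = 0,…,N. -/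
/-!
Under the CFL condition the upwind update `a - ν (a - b)` with `ν ∈ [0, 1]` is a convex
combination of two neighbouring values, and the feedback update multiplies a value by
`κ ∈ (0, 1]`; both keep the interval `[-δ, δ]` invariant. The CFL condition is only assumed on
`M_δ(0)`, so at each time level it becomes available once the bound is known there: induct on `n`.
-/

lemma abs_sub_mul_sub_le {a b ν δ : ℝ} (ha : |a| ≤ δ) (hb : |b| ≤ δ) (hν₀ : 0 ≤ ν)
    (hν₁ : ν ≤ 1) : |a - ν * (a - b)| ≤ δ := by
  have hmem := (convex_Icc (-δ) δ).add_smul_sub_mem (abs_le.mp ha) (abs_le.mp hb) ⟨hν₀, hν₁⟩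
  rw [smul_eq_mul] at hmem
  rw [show a - ν * (a - b) = a + ν * (b - a) by ring]
  exact abs_le.mpr hmem

lemma abs_le_of_feedback_boundary {M : ℕ} {δ c : ℝ} {w : ℕ → ℝ} (hM : 1 ≤ M) (hc₀ : 0 ≤ c)
    (hc₁ : c ≤ 1) (hinterior : ∀ j, 1 ≤ j → j ≤ M → |w j| ≤ δ) (hbc : w 0 = c * w M) :
    ∀ j ≤ M, |w j| ≤ δ := by
  intro j hj
  rcases Nat.eq_zero_or_pos j with rfl | hj₁
  · rw [hbc, abs_mul, abs_of_nonneg hc₀]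
    exact (mul_le_of_le_one_left (abs_nonneg _) hc₁).trans (hinterior M hM le_rfl)
  · exact hinterior j hj₁ hj

theorem discrete_maximum_principle_upwind_feedback_general
    (m M K N : ℕ) (hM : 2 ≤ M)
    (Δx Δt δ : ℝ)
    (Λ : Fin m → (Fin m → ℝ) → ℝ) (κ : Fin m → ℝ)
    (u : Fin m → ℕ → ℕ → ℕ → ℝ)
    -- (Δt/Δx)·Λ_i(v) ∈ (0,1] for every v ∈ M_δ(0) and every i
    (hCFL : ∀ v : Fin m → ℝ, (∀ i, |v i| ≤ δ) →
      ∀ i, 0 < Δt / Δx * Λ i v ∧ Δt / Δx * Λ i v ≤ 1)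
    -- 0 < κ_i ≤ 1
    (hκ : ∀ i, 0 < κ i ∧ κ i ≤ 1)
    -- |u^{(i),0}_{j,k}| ≤ δ for j = 1,…,M, k = 0,…,K
    (hinit : ∀ i, ∀ j, 1 ≤ j → j ≤ M → ∀ k, k ≤ K → |u i 0 j k| ≤ δ)
    -- u^{(i),0}_{0,k} = κ_i·u^{(i),0}_{M,k}
    (hbc0 : ∀ i, ∀ k, k ≤ K → u i 0 0 k = κ i * u i 0 M k)
    -- the upwind scheme with feedback boundary update
    (hscheme : ∀ n, n < N → ∀ i, ∀ k, k ≤ K →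
      (∀ j, 1 ≤ j → j ≤ M →
        u i (n+1) j k =
          u i n j k - Δt / Δx * Λ i (fun l => u l n j k) * (u i n j k - u i n (j-1) k)) ∧
      u i (n+1) 0 k = κ i * u i (n+1) M k) :
    ∀ n, n ≤ N → ∀ i, ∀ j, j ≤ M → ∀ k, k ≤ K → |u i n j k| ≤ δ := by
  have hM₁ : 1 ≤ M := by omega
  intro n
  induction n with
  | zero =>
    intro _ i j hj k hk
    exact abs_le_of_feedback_boundary hM₁ (hκ i).1.le (hκ i).2
      (fun j hj₁ hjM => hinit i j hj₁ hjM k hk) (hbc0 i k hk) j hj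
  | succ n ih =>
    intro hn i j hj k hk
    have hbound := ih (by omega)
    have hinterior (j : ℕ) (hj₁ : 1 ≤ j) (hjM : j ≤ M) : |u i (n + 1) j k| ≤ δ := by
      have hν := hCFL (fun l => u l n j k) (fun l => hbound l j hjM k hk) i
      rw [(hscheme n hn i k hk).1 j hj₁ hjM]
      exact abs_sub_mul_sub_le (hbound i j hjM k hk) (hbound i (j - 1) (by omega) k hk)
        hν.1.le hν.2
    exact abs_le_of_feedback_boundary hM₁ (hκ i).1.le (hκ i).2 hinterior
      (hscheme n hn i k hk).2 j hj

/-- Discrete maximum principle for the upwind scheme with feedback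
boundary condition (Proposition 2 of the paper).  Here `u i n j k` denotes
`u^{(i),n}_{j,k}`, the spatial mesh is `Δx = 1/M` with nodes `x_j = j·Δx`, and the
scheme is the upwind scheme with boundary update `u^{(i),n+1}_{0,k} = κ_i·u^{(i),n+1}_{M,k}`. -/
theorem discrete_maximum_principle_upwind_feedback
    (m M K N : ℕ) (hm : 1 ≤ m) (hM : 2 ≤ M)
    (Δx Δt δ : ℝ) (hΔx : Δx = 1 / M) (hΔt : 0 < Δt) (hδ : 0 < δ)
    (Λ : Fin m → (Fin m → ℝ) → ℝ) (κ : Fin m → ℝ)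
    (u : Fin m → ℕ → ℕ → ℕ → ℝ)
    -- (Δt/Δx)·Λ_i(v) ∈ (0,1] for every v ∈ M_δ(0) and every i
    (hCFL : ∀ v : Fin m → ℝ, (∀ i, |v i| ≤ δ) →
      ∀ i, 0 < Δt / Δx * Λ i v ∧ Δt / Δx * Λ i v ≤ 1)
    -- 0 < κ_i ≤ 1
    (hκ : ∀ i, 0 < κ i ∧ κ i ≤ 1)
    -- |u^{(i),0}_{j,k}| ≤ δ for j = 1,…,M, k = 0,…,K
    (hinit : ∀ i, ∀ j, 1 ≤ j → j ≤ M → ∀ k, k ≤ K → |u i 0 j k| ≤ δ)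
    -- u^{(i),0}_{0,k} = κ_i·u^{(i),0}_{M,k}
    (hbc0 : ∀ i, ∀ k, k ≤ K → u i 0 0 k = κ i * u i 0 M k)
    -- the upwind scheme with feedback boundary update
    (hscheme : ∀ n, n < N → ∀ i, ∀ k, k ≤ K →
      (∀ j, 1 ≤ j → j ≤ M →
        u i (n+1) j k =
          u i n j k - Δt / Δx * Λ i (fun l => u l n j k) * (u i n j k - u i n (j-1) k)) ∧
      u i (n+1) 0 k = κ i * u i (n+1) M k) :
    ∀ n, n ≤ N → ∀ i, ∀ j, j ≤ M → ∀ k, k ≤ K → |u i n j k| ≤ δ :=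
  discrete_maximum_principle_upwind_feedback_general m M K N hM Δx Δt δ Λ κ u hCFL hκ hinit hbc0
    hscheme
end

section
/- Bound on the discrete spatial derivative for the upwind scheme: assume that 0 < (Δt/Δx)·Λ_i(v) ≤ 1 for every v ∈ M_δ(0) and every i = 1,…,m, that 0 < κ_i ≤ 1, that for each i one has |Λ_i(u) − Λ_i(v)| ≤ J_i·max_ℓ |u^{(ℓ)} − v^{(ℓ)}| whenever u, v ∈ M_δ(0) with constants J_i > 0, and set J* := max_i J_i and T := N·Δt. Assume δ < 1, δ·e^{T·J*} ≤ 1, |u^{(i),0}_{j,k}| ≤ δ and |u^{(i),0}_{j,k} − u^{(i),0}_{j−1,k}| ≤ δ·Δx for all i, k and j = 1,…,M, u^{(i),0}_{0,k} = κ_i·u^{(i),0}_{M,k}, and that the inflow-side discrete derivative satisfies |u^{(i),n}_{1,k} − u^{(i),n}_{0,k}| ≤ δ·e^{n·Δt·J_i}·Δx for all i, k and n = 0,…,N. Then the values produced by the scheme satisfy |u^{(i),n}_{j,k} − u^{(i),n}_{j−1,k}| ≤ δ·e^{n·Δt·J_i}·Δx for all i = 1,…,m, k = 0,…,K, n = 0,…,N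 and all j = 2,…,M. -/
set_option maxHeartbeats 1000000


/-- Bound on the discrete spatial derivative for the upwind scheme
(Proposition 3 of the paper).  Here `u i n j k` denotes `u^{(i),n}_{j,k}`,
`Δx = 1/M`, `J* = max_i J_i` and `T = N·Δt`. -/
theorem discrete_derivative_bound_upwind
    (m M K N : ℕ) (hm : 1 ≤ m) (hM : 2 ≤ M)
    (Δx Δt δ : ℝ) (hΔx : Δx = 1 / M) (hΔt : 0 < Δt) (hδpos : 0 < δ) (hδ1 : δ < 1)
    (Λ : Fin m → (Fin m → ℝ) → ℝ) (κ : Fin m → ℝ) (J : Fin m → ℝ)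
    (u : Fin m → ℕ → ℕ → ℕ → ℝ)
    -- (Δt/Δx)·Λ_i(v) ∈ (0,1] for every v ∈ M_δ(0) and every i
    (hCFL : ∀ v : Fin m → ℝ, (∀ i, |v i| ≤ δ) →
      ∀ i, 0 < Δt / Δx * Λ i v ∧ Δt / Δx * Λ i v ≤ 1)
    -- 0 < κ_i ≤ 1
    (hκ : ∀ i, 0 < κ i ∧ κ i ≤ 1)
    -- Lipschitz bounds for Λ_i on M_δ(0), with constants J_i > 0
    (hJ : ∀ i, 0 < J i)
    (hLip : ∀ v w : Fin m → ℝ, (∀ l, |v l| ≤ δ) → (∀ l, |w l| ≤ δ) →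
      ∀ i, |Λ i v - Λ i w| ≤ J i * ⨆ l, |v l - w l|)
    -- δ·e^{T·J*} ≤ 1 with J* = max_i J_i, T = N·Δt
    (hδT : δ * Real.exp ((N * Δt) * ⨆ i, J i) ≤ 1)
    -- |u^{(i),0}_{j,k}| ≤ δ and |u^{(i),0}_{j,k} − u^{(i),0}_{j−1,k}| ≤ δ·Δx
    (hinit : ∀ i, ∀ j, 1 ≤ j → j ≤ M → ∀ k, k ≤ K → |u i 0 j k| ≤ δ)
    (hinitdiff : ∀ i, ∀ j, 1 ≤ j → j ≤ M → ∀ k, k ≤ K →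
      |u i 0 j k - u i 0 (j-1) k| ≤ δ * Δx)
    -- u^{(i),0}_{0,k} = κ_i·u^{(i),0}_{M,k}
    (hbc0 : ∀ i, ∀ k, k ≤ K → u i 0 0 k = κ i * u i 0 M k)
    -- inflow-side discrete derivative bound
    (hinflow : ∀ i, ∀ k, k ≤ K → ∀ n, n ≤ N →
      |u i n 1 k - u i n 0 k| ≤ δ * Real.exp (n * Δt * J i) * Δx)
    -- the upwind scheme with feedback boundary update
    (hscheme : ∀ n, n < N → ∀ i, ∀ k, k ≤ K →
      (∀ j, 1 ≤ j → j ≤ M →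
        u i (n+1) j k =
          u i n j k - Δt / Δx * Λ i (fun l => u l n j k) * (u i n j k - u i n (j-1) k)) ∧
      u i (n+1) 0 k = κ i * u i (n+1) M k) :
    ∀ i, ∀ k, k ≤ K → ∀ n, n ≤ N → ∀ j, 2 ≤ j → j ≤ M →
      |u i n j k - u i n (j-1) k| ≤ δ * Real.exp (n * Δt * J i) * Δx := by

  have hMpos : (0:ℝ) < M := by
    have : (2:ℝ) ≤ M := by exact_mod_cast hM
    linarith
  have hΔxpos : 0 < Δx := by rw [hΔx]; positivity
  haveI : Nonempty (Fin m) := ⟨⟨0, hm⟩⟩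
  -- main simultaneous induction
  have main : ∀ n, n ≤ N →
      (∀ i k, k ≤ K → ∀ j, j ≤ M → |u i n j k| ≤ δ) ∧
      (∀ i k, k ≤ K → ∀ j, 1 ≤ j → j ≤ M →
        |u i n j k - u i n (j-1) k| ≤ δ * Real.exp (n * Δt * J i) * Δx) := by
    intro n
    induction n with
    | zero =>
      intro _
      constructor
      · intro i k hk j hjM
        rcases Nat.eq_zero_or_pos j with h0 | h1
        · subst h0
          rw [hbc0 i k hk, abs_mul]
          have hM' := hinit i M (by omega) le_rfl k hk
          have hκi := hκ i
          have : |κ i| ≤ 1 := by rw [abs_of_pos hκi.1]; exact hκi.2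
          calc |κ i| * |u i 0 M k| ≤ 1 * δ := by
                apply mul_le_mul this hM' (abs_nonneg _) zero_le_one
            _ = δ := one_mul δ
        · exact hinit i j h1 hjM k hk
      · intro i k hk j hj1 hjM
        have := hinitdiff i j hj1 hjM k hk
        simpa using this
    | succ n ih =>
      intro hn1
      have hn : n < N := hn1
      have hnN : n ≤ N := Nat.le_of_lt hn
      obtain ⟨ihb, ihd⟩ := ih hnN
      -- boundedness at level n+1, interior points
      have hb1 : ∀ i k, k ≤ K → ∀ j, 1 ≤ j → j ≤ M → |u i (n+1) j k| ≤ δ := by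
        intro i k hk j hj1 hjM
        have hs := (hscheme n hn i k hk).1 j hj1 hjM
        obtain ⟨hp, hl⟩ := hCFL (fun l => u l n j k) (fun l => ihb l k hk j hjM) i
        have h1 := ihb i k hk j hjM
        have h2 := ihb i k hk (j-1) (by omega)
        rw [hs]
        rw [abs_le] at h1 h2 ⊢
        constructor <;> nlinarith [h1.1, h1.2, h2.1, h2.2]
      have hb : ∀ i k, k ≤ K → ∀ j, j ≤ M → |u i (n+1) j k| ≤ δ := by
        intro i k hk j hjM
        rcases Nat.eq_zero_or_pos j with h0 | h1
        · subst h0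
          rw [(hscheme n hn i k hk).2, abs_mul]
          have hM' := hb1 i k hk M (by omega) le_rfl
          have hκi := hκ i
          have hκa : |κ i| ≤ 1 := by rw [abs_of_pos hκi.1]; exact hκi.2
          calc |κ i| * |u i (n+1) M k| ≤ 1 * δ := by
                apply mul_le_mul hκa hM' (abs_nonneg _) zero_le_one
            _ = δ := one_mul δ
        · exact hb1 i k hk j h1 hjM
      refine ⟨hb, ?_⟩
      intro i k hk j hj1 hjM
      rcases eq_or_lt_of_le hj1 with h1 | h2
      · -- j = 1 : inflow hypothesis
        rw [← h1]
        simpa using hinflow i k hk (n+1) hn1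
      · -- 2 ≤ j
        have hj2 : 2 ≤ j := h2
        have hj1M : j - 1 ≤ M := by omega
        have hj11 : 1 ≤ j - 1 := by omega
        set v : Fin m → ℝ := fun l => u l n (j-1) k with hv
        set w : Fin m → ℝ := fun l => u l n j k with hw
        have hvb : ∀ l, |v l| ≤ δ := fun l => ihb l k hk (j-1) hj1M
        have hwb : ∀ l, |w l| ≤ δ := fun l => ihb l k hk j hjM
        -- J i ≤ sup and exponent bound
        have hJs : ∀ l : Fin m, J l ≤ ⨆ i, J i := fun l =>
          le_ciSup (Set.Finite.bddAbove (Set.finite_range J)) l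
        -- sup of component differences ≤ Δx
        have hsup : (⨆ l, |v l - w l|) ≤ Δx := by
          apply ciSup_le
          intro l
          have hdl : |v l - w l| ≤ δ * Real.exp (n * Δt * J l) * Δx := by
            rw [abs_sub_comm]
            exact ihd l k hk j hj1 hjM
          have hex : (n:ℝ) * Δt * J l ≤ (N * Δt) * ⨆ i, J i := by
            have hnc : (n:ℝ) ≤ N := by exact_mod_cast hnN
            have h1 : (n:ℝ) * Δt * J l ≤ (N:ℝ) * Δt * J l := by
              nlinarith [mul_nonneg (mul_nonneg (sub_nonneg.mpr hnc) hΔt.le) (hJ l).le]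
            have h2 : (N:ℝ) * Δt * J l ≤ (N * Δt) * ⨆ i, J i := by
              have hNt : (0:ℝ) ≤ (N:ℝ) * Δt := by positivity
              calc (N:ℝ) * Δt * J l = (N * Δt) * J l := by ring
                _ ≤ (N * Δt) * ⨆ i, J i := by
                  exact mul_le_mul_of_nonneg_left (hJs l) hNt
            linarith
          have hde : δ * Real.exp (n * Δt * J l) ≤ 1 := by
            calc δ * Real.exp (n * Δt * J l)
                ≤ δ * Real.exp ((N * Δt) * ⨆ i, J i) := by
                  apply mul_le_mul_of_nonneg_left (Real.exp_le_exp.mpr hex) hδpos.le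
              _ ≤ 1 := hδT
          calc |v l - w l| ≤ δ * Real.exp (n * Δt * J l) * Δx := hdl
            _ ≤ 1 * Δx := by
                apply mul_le_mul_of_nonneg_right hde hΔxpos.le
            _ = Δx := one_mul Δx
        -- Lipschitz bound on speed difference
        have hΛd : |Λ i v - Λ i w| ≤ J i * Δx := by
          calc |Λ i v - Λ i w| ≤ J i * ⨆ l, |v l - w l| := hLip v w hvb hwb i
            _ ≤ J i * Δx := mul_le_mul_of_nonneg_left hsup (hJ i).le
        set lv : ℝ := Δt / Δx * Λ i v with hlv
        set lw : ℝ := Δt / Δx * Λ i w with hlw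
        have hlamd : |lv - lw| ≤ Δt * J i := by
          have : lv - lw = Δt / Δx * (Λ i v - Λ i w) := by rw [hlv, hlw]; ring
          rw [this, abs_mul, abs_of_pos (by positivity : (0:ℝ) < Δt / Δx)]
          calc Δt / Δx * |Λ i v - Λ i w| ≤ Δt / Δx * (J i * Δx) := by
                apply mul_le_mul_of_nonneg_left hΛd (by positivity)
            _ = Δt * J i := by field_simp
        obtain ⟨hlvp, hlvl⟩ := hCFL v hvb i
        obtain ⟨hlwp, hlwl⟩ := hCFL w hwb i
        -- scheme at j and j-1
        have hs1 : u i (n+1) j k = u i n j k - lw * (u i n j k - u i n (j-1) k) :=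
          (hscheme n hn i k hk).1 j hj1 hjM
        have hs2 : u i (n+1) (j-1) k
            = u i n (j-1) k - lv * (u i n (j-1) k - u i n (j-1-1) k) :=
          (hscheme n hn i k hk).1 (j-1) hj11 hj1M
        set a : ℝ := u i n j k - u i n (j-1) k with ha
        set b : ℝ := u i n (j-1) k - u i n (j-1-1) k with hb'
        set B : ℝ := δ * Real.exp (n * Δt * J i) * Δx with hB
        have hBnn : 0 ≤ B := by rw [hB]; positivity
        have haB : |a| ≤ B := ihd i k hk j hj1 hjM
        have hbB : |b| ≤ B := ihd i k hk (j-1) hj11 hj1M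
        have key : u i (n+1) j k - u i (n+1) (j-1) k = (1 - lw) * a + lv * b := by
          rw [hs1, hs2, ha, hb']; ring
        have hstep : |u i (n+1) j k - u i (n+1) (j-1) k| ≤ B * (1 + Δt * J i) := by
          rw [key]
          calc |(1 - lw) * a + lv * b| ≤ |(1 - lw) * a| + |lv * b| := abs_add_le _ _
            _ = (1 - lw) * |a| + lv * |b| := by
                rw [abs_mul, abs_mul, abs_of_nonneg (by linarith), abs_of_pos hlvp]
            _ ≤ (1 - lw) * B + lv * B := by
                have h1 : (1 - lw) * |a| ≤ (1 - lw) * B :=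
                  mul_le_mul_of_nonneg_left haB (by linarith)
                have h2 : lv * |b| ≤ lv * B := mul_le_mul_of_nonneg_left hbB hlvp.le
                linarith
            _ ≤ B * (1 + Δt * J i) := by
                have hd2 : lv - lw ≤ Δt * J i := (abs_le.mp hlamd).2
                have := mul_le_mul_of_nonneg_left hd2 hBnn
                linarith
        have hexp : B * (1 + Δt * J i) ≤ δ * Real.exp ((n+1 : ℕ) * Δt * J i) * Δx := by
          have h1 : 1 + Δt * J i ≤ Real.exp (Δt * J i) := by linarith [Real.add_one_le_exp (Δt * J i)]
          have h2 : B * (1 + Δt * J i) ≤ B * Real.exp (Δt * J i) :=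
            mul_le_mul_of_nonneg_left h1 hBnn
          have h3 : B * Real.exp (Δt * J i) = δ * Real.exp ((n+1 : ℕ) * Δt * J i) * Δx := by
            rw [hB]
            push_cast
            rw [show ((n:ℝ)+1) * Δt * J i = (n:ℝ) * Δt * J i + Δt * J i by ring,
              Real.exp_add]
            ring
          linarith [h2, h3.le]
        calc |u i (n+1) j k - u i (n+1) (j-1) k| ≤ B * (1 + Δt * J i) := hstep
          _ ≤ δ * Real.exp ((n+1 : ℕ) * Δt * J i) * Δx := hexp
  intro i k hk n hn j hj2 hjM
  exact (main n hn).2 i k hk j (by omega) hjM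
end

section
/- Exponential decay of the discrete Lyapunov function for the nonlinear diagonal system (Theorem 1): assume (i) 0 < (Δt/Δx)·Λ_i(v) ≤ 1 for every v ∈ M_δ(0) and every i, so that 0 < D^min_i ≤ D^max_i ≤ 1; (ii) for each i, |Λ_i(u) − Λ_i(v)| ≤ J_i·max_ℓ |u^{(ℓ)} − v^{(ℓ)}| for all u, v ∈ M_δ(0) with J_i > 0, and set J* := max_i J_i, T := N·Δt; (iii) 0 < κ_i < √(D^min_i/D^max_i) and 0 < μ_i ≤ ln(D^min_i/(D^max_i·κ_i²)); (iv) |u^{(i),0}_{j,k}| ≤ δ for all i, j, k, |u^{(i),0}_{j,k} − u^{(i),0}_{j−1,k}| ≤ δ·Δx for j = 1,…,M, u^{(i),0}_{0,k} = κ_i·u^{(i),0}_{M,k}, and |u^{(i),n}_{1,k} − u^{(i),n}_{0,k}| ≤ δ·e^{n·Δt·J_i}·Δx for all i, k, n; (v) δ ≤ min{1, (Δx/(2Δt))·min_i [μ_i·D^min_i·e^{−T·J*}/J*]} and δ·e^{T·J*} ≤ 1; (vi) the weights satisfy ρ_k ≥ 0. Then the discrete Lyapunov function satisfies L^n ≤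 e^{−ν·t^n}·L^0 for all n = 0,…,N, where ν := (Δx/(2Δt))·min_i {μ_i·D^min_i·e^{−μ_i·Δx}}. -/
private lemma convex_sq_aux (a b t : ℝ) (h0 : 0 ≤ t) (h1 : t ≤ 1) :
    ((1-t)*a + t*b)^2 ≤ (1-t)*a^2 + t*b^2 := by
  nlinarith [sq_nonneg (a-b), mul_nonneg h0 (sub_nonneg.2 h1)]

private lemma exp_decay_aux (x : ℝ) (hx : 0 ≤ x) :
    x * Real.exp (-x) ≤ 1 - Real.exp (-x) := by
  have h1 : Real.exp (-x) * Real.exp x = 1 := by rw [← Real.exp_add]; simp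
  nlinarith [Real.add_one_le_exp x, Real.exp_pos (-x)]

private lemma telescope_aux (H : ℕ → ℝ) (M : ℕ) :
    ∑ j ∈ Finset.Icc 1 M, (H (j-1) - H j) = H 0 - H M := by
  have h : ∑ j ∈ Finset.Icc 1 M, (H (j-1) - H j) = ∑ i ∈ Finset.range M, (H i - H (i+1)) := by
    refine Finset.sum_nbij' (fun j => j - 1) (fun i => i + 1) ?_ ?_ ?_ ?_ ?_ <;>
      simp_all [Finset.mem_Icc, Finset.mem_range] <;> omega
  rw [h, Finset.sum_range_sub' H M]


set_option maxHeartbeats 2000000 in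


/-- Exponential decay of the discrete Lyapunov function for the
nonlinear diagonal system (Theorem 1 of the paper).  Here `u i n j k` denotes
`u^{(i),n}_{j,k}`, `Δx = 1/M`, `x_j = j·Δx`, `t^n = n·Δt`,
`M_δ(0) = {v : |v^{(i)}| ≤ δ ∀ i}`,
`D^max_i = (Δt/Δx)·sup_{v∈M_δ(0)} Λ_i(v)`, `D^min_i = (Δt/Δx)·inf_{v∈M_δ(0)} Λ_i(v)`,
`L^n = Δx·Δξ·Σ_{i,j,k} e^{−μ_i·x_j}·(u^{(i),n}_{j,k})²·ρ_k` and
`ν = (Δx/(2Δt))·min_i μ_i·D^min_i·e^{−μ_i·Δx}`. -/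
theorem lyapunov_exponential_decay_nonlinear_diagonal
    (m M K N : ℕ) (hm : 1 ≤ m) (hM : 2 ≤ M) (hK : 1 ≤ K)
    (Δx Δt Δξ δ : ℝ) (hΔx : Δx = 1 / M) (hΔt : 0 < Δt) (hΔξ : 0 < Δξ) (hδpos : 0 < δ)
    (Λ : Fin m → (Fin m → ℝ) → ℝ) (κ μ J : Fin m → ℝ) (ρ : ℕ → ℝ)
    (u : Fin m → ℕ → ℕ → ℕ → ℝ)
    (Mδ : Set (Fin m → ℝ)) (hMδ : Mδ = {v | ∀ i, |v i| ≤ δ})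
    (Dmin Dmax : Fin m → ℝ)
    (hDmin : ∀ i, Dmin i = Δt / Δx * sInf ((fun v => Λ i v) '' Mδ))
    (hDmax : ∀ i, Dmax i = Δt / Δx * sSup ((fun v => Λ i v) '' Mδ))
    (Jstar T : ℝ) (hJstar : Jstar = ⨆ i, J i) (hT : T = N * Δt)
    -- (i) the CFL-type condition, so that 0 < D^min_i ≤ D^max_i ≤ 1
    (hCFL : ∀ v ∈ Mδ, ∀ i, 0 < Δt / Δx * Λ i v ∧ Δt / Δx * Λ i v ≤ 1)
    (hD : ∀ i, 0 < Dmin i ∧ Dmin i ≤ Dmax i ∧ Dmax i ≤ 1)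
    -- (ii) Lipschitz bounds with constants J_i > 0
    (hJ : ∀ i, 0 < J i)
    (hLip : ∀ v ∈ Mδ, ∀ w ∈ Mδ, ∀ i, |Λ i v - Λ i w| ≤ J i * ⨆ l, |v l - w l|)
    -- (iii) gains and Lyapunov weights
    (hκ : ∀ i, 0 < κ i ∧ κ i < Real.sqrt (Dmin i / Dmax i))
    (hμ : ∀ i, 0 < μ i ∧ μ i ≤ Real.log (Dmin i / (Dmax i * κ i ^ 2)))
    -- (iv) initial and boundary bounds
    (hinit : ∀ i, ∀ j, 1 ≤ j → j ≤ M → ∀ k, k ≤ K → |u i 0 j k| ≤ δ)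
    (hinitdiff : ∀ i, ∀ j, 1 ≤ j → j ≤ M → ∀ k, k ≤ K →
      |u i 0 j k - u i 0 (j-1) k| ≤ δ * Δx)
    (hbc0 : ∀ i, ∀ k, k ≤ K → u i 0 0 k = κ i * u i 0 M k)
    (hinflow : ∀ i, ∀ k, k ≤ K → ∀ n, n ≤ N →
      |u i n 1 k - u i n 0 k| ≤ δ * Real.exp (n * Δt * J i) * Δx)
    -- (v) smallness of δ
    (hδsmall : δ ≤ min 1 (Δx / (2 * Δt) * ⨅ i, μ i * Dmin i * Real.exp (-T * Jstar) / Jstar))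
    (hδT : δ * Real.exp (T * Jstar) ≤ 1)
    -- (vi) nonnegative weights
    (hρ : ∀ k, 0 ≤ ρ k)
    -- the upwind scheme with feedback boundary update
    (hscheme : ∀ n, n < N → ∀ i, ∀ k, k ≤ K →
      (∀ j, 1 ≤ j → j ≤ M →
        u i (n+1) j k =
          u i n j k - Δt / Δx * Λ i (fun l => u l n j k) * (u i n j k - u i n (j-1) k)) ∧
      u i (n+1) 0 k = κ i * u i (n+1) M k)
    -- the discrete Lyapunov function and the decay rate
    (L : ℕ → ℝ)
    (hL : ∀ n, L n = Δx * Δξ * ∑ i : Fin m, ∑ j ∈ Finset.Icc 1 M, ∑ k ∈ Finset.Icc 1 K,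
      Real.exp (-(μ i) * ((j : ℝ) * Δx)) * (u i n j k) ^ 2 * ρ k)
    (ν : ℝ) (hν : ν = Δx / (2 * Δt) * ⨅ i, μ i * Dmin i * Real.exp (-(μ i) * Δx)) :
    ∀ n, n ≤ N → L n ≤ Real.exp (-ν * (n * Δt)) * L 0 := by
  have hne : Nonempty (Fin m) := ⟨⟨0, hm⟩⟩
  have hM0 : (0:ℝ) < (M:ℝ) := by
    have : (2:ℝ) ≤ (M:ℝ) := by exact_mod_cast hM
    linarith
  have hΔx0 : 0 < Δx := by rw [hΔx]; exact one_div_pos.2 hM0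
  have hr0 : 0 < Δt / Δx := div_pos hΔt hΔx0
  have hMΔx : (M:ℝ) * Δx = 1 := by rw [hΔx]; field_simp
  have hκD : ∀ i, κ i ^ 2 * Dmax i * Real.exp (μ i) ≤ Dmin i := by
    intro i
    have hk := (hκ i).1
    have hd1 := (hD i).1
    have hd2 := (hD i).2.1
    have hdm0 : 0 < Dmax i := lt_of_lt_of_le hd1 hd2
    have h1 : 0 < Dmin i / (Dmax i * κ i ^ 2) := by positivity
    have h2 : Real.exp (μ i) ≤ Dmin i / (Dmax i * κ i ^ 2) := by
      calc Real.exp (μ i) ≤ Real.exp (Real.log (Dmin i / (Dmax i * κ i ^ 2))) :=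
            Real.exp_le_exp.2 (hμ i).2
        _ = Dmin i / (Dmax i * κ i ^ 2) := Real.exp_log h1
    have h3 : 0 < Dmax i * κ i ^ 2 := by positivity
    rw [le_div_iff₀ h3] at h2
    nlinarith
  have hκ1 : ∀ i, κ i ≤ 1 := by
    intro i
    have h1 := hκD i
    have h2 : 1 ≤ Real.exp (μ i) := by
      rw [← Real.exp_zero]; exact Real.exp_le_exp.2 (le_of_lt (hμ i).1)
    have hd1 := (hD i).1
    have hd2 := (hD i).2.1
    have hd3 := (hD i).2.2
    have hdm0 : 0 < Dmax i := lt_of_lt_of_le hd1 hd2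
    have hk := (hκ i).1
    have h4 : κ i ^ 2 * Dmax i ≤ κ i ^ 2 * Dmax i * Real.exp (μ i) := by nlinarith [mul_nonneg (mul_nonneg (sq_nonneg (κ i)) hdm0.le) (sub_nonneg.2 h2)]
    have h5 : κ i ^ 2 ≤ 1 := by nlinarith
    nlinarith
  have hDb : ∀ v ∈ Mδ, ∀ i, Dmin i ≤ Δt / Δx * Λ i v ∧ Δt / Δx * Λ i v ≤ Dmax i := by
    intro v hv i
    have hbdda : BddAbove ((fun v => Λ i v) '' Mδ) := by
      refine ⟨Δx / Δt, ?_⟩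
      rintro y ⟨w, hw, rfl⟩
      have h := (hCFL w hw i).2
      show Λ i w ≤ Δx / Δt
      rw [le_div_iff₀ hΔt]
      rw [div_mul_eq_mul_div, div_le_one hΔx0] at h
      nlinarith
    have hbddb : BddBelow ((fun v => Λ i v) '' Mδ) := by
      refine ⟨0, ?_⟩
      rintro y ⟨w, hw, rfl⟩
      have h := (hCFL w hw i).1
      show (0:ℝ) ≤ Λ i w
      by_contra hc
      push_neg at hc
      nlinarith
    constructor
    · rw [hDmin i]
      exact mul_le_mul_of_nonneg_left (csInf_le hbddb ⟨v, hv, rfl⟩) (le_of_lt hr0)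
    · rw [hDmax i]
      exact mul_le_mul_of_nonneg_left (le_csSup hbdda ⟨v, hv, rfl⟩) (le_of_lt hr0)
  -- uniform bound |u| ≤ δ
  have hA : ∀ n, n ≤ N → ∀ j, j ≤ M → ∀ k, k ≤ K → ∀ i, |u i n j k| ≤ δ := by
    intro n
    induction n with
    | zero =>
      intro _ j hj k hk i
      rcases Nat.eq_zero_or_pos j with h0 | h1
      · subst h0
        rw [hbc0 i k hk, abs_mul]
        calc |κ i| * |u i 0 M k| ≤ 1 * δ := by
              apply mul_le_mul ?_ (hinit i M (by omega) le_rfl k hk) (abs_nonneg _) zero_le_one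
              rw [abs_of_pos (hκ i).1]; exact hκ1 i
          _ = δ := one_mul δ
      · exact hinit i j h1 hj k hk
    | succ n ih =>
      intro hn1 j hj k hk i
      have hnN : n < N := by omega
      have ihn := ih (by omega)
      have hmemn : ∀ j', j' ≤ M → (fun l => u l n j' k) ∈ Mδ := by
        intro j' hj'; rw [hMδ]; intro l; exact ihn j' hj' k hk l
      have hInt : ∀ j', 1 ≤ j' → j' ≤ M → ∀ i', |u i' (n+1) j' k| ≤ δ := by
        intro j' h1 hjM i'
        have hs := (hscheme n hnN i' k hk).1 j' h1 hjM
        have hdb := hDb _ (hmemn j' hjM) i'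
        set d := Δt / Δx * Λ i' (fun l => u l n j' k) with hd
        have hd0 : 0 < d := lt_of_lt_of_le (hD i').1 hdb.1
        have hd1 : d ≤ 1 := le_trans hdb.2 (hD i').2.2
        have heq : u i' (n+1) j' k = (1-d) * u i' n j' k + d * u i' n (j'-1) k := by
          rw [hs]; ring
        rw [heq]
        have ha := ihn j' hjM k hk i'
        have hb := ihn (j'-1) (by omega) k hk i'
        calc |(1-d) * u i' n j' k + d * u i' n (j'-1) k|
            ≤ |(1-d) * u i' n j' k| + |d * u i' n (j'-1) k| := abs_add_le _ _
          _ = (1-d) * |u i' n j' k| + d * |u i' n (j'-1) k| := by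
              rw [abs_mul, abs_mul, abs_of_nonneg (by linarith), abs_of_nonneg (le_of_lt hd0)]
          _ ≤ δ := by
              nlinarith [mul_le_mul_of_nonneg_left ha (by linarith : (0:ℝ) ≤ 1-d),
                mul_le_mul_of_nonneg_left hb hd0.le]
      rcases Nat.eq_zero_or_pos j with h0 | h1
      · subst h0
        rw [(hscheme n hnN i k hk).2, abs_mul]
        calc |κ i| * |u i (n+1) M k| ≤ 1 * δ := by
              apply mul_le_mul ?_ (hInt M (by omega) le_rfl i) (abs_nonneg _) zero_le_one
              rw [abs_of_pos (hκ i).1]; exact hκ1 i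
          _ = δ := one_mul δ
      · exact hInt j h1 hj i
  have hmem : ∀ n, n ≤ N → ∀ j, j ≤ M → ∀ k, k ≤ K → (fun l => u l n j k) ∈ Mδ := by
    intro n hn j hj k hk; rw [hMδ]; intro l; exact hA n hn j hj k hk l
  have hbc : ∀ n, n ≤ N → ∀ i, ∀ k, k ≤ K → u i n 0 k = κ i * u i n M k := by
    intro n hn i k hk
    cases n with
    | zero => exact hbc0 i k hk
    | succ n => exact (hscheme n (by omega) i k hk).2
  have hJle : ∀ i, J i ≤ Jstar := by
    intro i; rw [hJstar]; exact le_ciSup (Finite.bddAbove_range J) i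
  have hJs0 : 0 < Jstar := lt_of_lt_of_le (hJ (Classical.arbitrary _)) (hJle _)
  have hT0 : 0 ≤ T := by rw [hT]; positivity
  have hexpmono : ∀ (n' : ℕ), n' ≤ N → ∀ l, Real.exp ((n':ℝ)*Δt*J l) ≤ Real.exp (T*Jstar) := by
    intro n' hn' l
    apply Real.exp_le_exp.2
    have h1 : (n':ℝ)*Δt ≤ T := by
      rw [hT]
      have : (n':ℝ) ≤ (N:ℝ) := by exact_mod_cast hn'
      nlinarith
    have h2 : (0:ℝ) ≤ (n':ℝ)*Δt := by positivity
    nlinarith [hJ l, hJle l, mul_le_mul_of_nonneg_right h1 (le_of_lt (hJ l)),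
      mul_le_mul_of_nonneg_left (hJle l) hT0]
    -- spatial difference bound
  have hC : ∀ n, n ≤ N → ∀ l, ∀ k, k ≤ K → ∀ j, 1 ≤ j → j ≤ M →
      |u l n j k - u l n (j-1) k| ≤ δ * Real.exp ((n:ℝ) * Δt * J l) * Δx := by
    intro n
    induction n with
    | zero =>
      intro _ l k hk j h1 hjM
      have := hinitdiff l j h1 hjM k hk
      simpa using this
    | succ n ih =>
      intro hn1 l k hk j h1 hjM
      have hnN : n < N := by omega
      have hnN' : n ≤ N := by omega
      have ihn := ih hnN'
      rcases eq_or_lt_of_le h1 with h1' | h2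
      · rw [← h1']
        simpa using hinflow l k hk (n+1) hn1
      · have hsj := (hscheme n hnN l k hk).1 j h1 hjM
        have hsj1 := (hscheme n hnN l k hk).1 (j-1) (by omega) (by omega)
        set d1 := Δt / Δx * Λ l (fun l' => u l' n j k) with hd1
        set d2 := Δt / Δx * Λ l (fun l' => u l' n (j-1) k) with hd2
        have hm1 := hmem n hnN' j hjM k hk
        have hm2 := hmem n hnN' (j-1) (by omega) k hk
        have hdb1 := hDb _ hm1 l
        have hdb2 := hDb _ hm2 l
        have hd10 : 0 < d1 := lt_of_lt_of_le (hD l).1 hdb1.1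
        have hd11 : d1 ≤ 1 := le_trans hdb1.2 (hD l).2.2
        have hd20 : 0 < d2 := lt_of_lt_of_le (hD l).1 hdb2.1
        have hd21 : d2 ≤ 1 := le_trans hdb2.2 (hD l).2.2
        have hsupb : (⨆ l', |u l' n j k - u l' n (j-1) k|) ≤ Δx := by
          apply ciSup_le
          intro l'
          calc |u l' n j k - u l' n (j-1) k| ≤ δ * Real.exp ((n:ℝ)*Δt*J l') * Δx :=
                ihn l' k hk j h1 hjM
            _ ≤ δ * Real.exp (T * Jstar) * Δx := by
                apply mul_le_mul_of_nonneg_right ?_ (le_of_lt hΔx0)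
                exact mul_le_mul_of_nonneg_left (hexpmono n hnN' l') (le_of_lt hδpos)
            _ ≤ 1 * Δx := mul_le_mul_of_nonneg_right hδT (le_of_lt hΔx0)
            _ = Δx := one_mul _
        have hdd : |d2 - d1| ≤ Δt * J l := by
          rw [abs_sub_comm]
          have hlip := hLip _ hm1 _ hm2 l
          have h2' : |d1 - d2| = Δt/Δx * |Λ l (fun l' => u l' n j k) - Λ l (fun l' => u l' n (j-1) k)| := by
            rw [hd1, hd2, ← mul_sub, abs_mul, abs_of_pos hr0]
          rw [h2']
          calc Δt/Δx * |Λ l (fun l' => u l' n j k) - Λ l (fun l' => u l' n (j-1) k)|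
              ≤ Δt/Δx * (J l * Δx) := by
                apply mul_le_mul_of_nonneg_left ?_ (le_of_lt hr0)
                exact le_trans hlip (mul_le_mul_of_nonneg_left hsupb (le_of_lt (hJ l)))
            _ = Δt * J l := by field_simp
        have hw : u l (n+1) j k - u l (n+1) (j-1) k
            = (1-d1) * (u l n j k - u l n (j-1) k) + d2 * (u l n (j-1) k - u l n ((j-1)-1) k) := by
          rw [hsj, hsj1]; ring
        set B := δ * Real.exp ((n:ℝ)*Δt*J l) * Δx with hB
        have hw1 : |u l n j k - u l n (j-1) k| ≤ B := ihn l k hk j h1 hjM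
        have hw2 : |u l n (j-1) k - u l n ((j-1)-1) k| ≤ B := ihn l k hk (j-1) (by omega) (by omega)
        have hB0 : 0 ≤ B := by positivity
        rw [hw]
        calc |(1-d1) * (u l n j k - u l n (j-1) k) + d2 * (u l n (j-1) k - u l n ((j-1)-1) k)|
            ≤ |(1-d1) * (u l n j k - u l n (j-1) k)| + |d2 * (u l n (j-1) k - u l n ((j-1)-1) k)| :=
              abs_add_le _ _
          _ = (1-d1) * |u l n j k - u l n (j-1) k| + d2 * |u l n (j-1) k - u l n ((j-1)-1) k| := by
              rw [abs_mul, abs_mul, abs_of_nonneg (by linarith), abs_of_nonneg (le_of_lt hd20)]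
          _ ≤ (1-d1) * B + d2 * B := by
              have := mul_le_mul_of_nonneg_left hw1 (by linarith : (0:ℝ) ≤ 1-d1)
              have := mul_le_mul_of_nonneg_left hw2 (le_of_lt hd20)
              linarith
          _ ≤ B * (1 + Δt * J l) := by
              have h3 := le_abs_self (d2 - d1)
              nlinarith
          _ ≤ B * Real.exp (Δt * J l) := by
              apply mul_le_mul_of_nonneg_left ?_ hB0
              nlinarith [Real.add_one_le_exp (Δt * J l)]
          _ = δ * Real.exp (((n+1:ℕ):ℝ) * Δt * J l) * Δx := by
              have h4 : (((n+1:ℕ)):ℝ) * Δt * J l = (n:ℝ)*Δt*J l + Δt*J l := by push_cast; ring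
              rw [h4, Real.exp_add, hB]; ring
  -- ν facts
  have hν0 : 0 ≤ ν := by
    rw [hν]
    apply mul_nonneg (by positivity)
    apply le_ciInf
    intro i
    have := (hμ i).1
    have := (hD i).1
    positivity
  have hνΔt : ∀ i, ν * Δt ≤ Δx/2 * (μ i * Dmin i * Real.exp (-(μ i) * Δx)) := by
    intro i
    rw [hν]
    have h1 : (⨅ i, μ i * Dmin i * Real.exp (-(μ i)*Δx)) ≤ μ i * Dmin i * Real.exp (-(μ i)*Δx) :=
      ciInf_le (Finite.bddBelow_range _) i
    have h2 : Δx / (2*Δt) * (⨅ i, μ i * Dmin i * Real.exp (-(μ i)*Δx)) * Δt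
        = Δx/2 * (⨅ i, μ i * Dmin i * Real.exp (-(μ i)*Δx)) := by
      field_simp
    rw [h2]
    exact mul_le_mul_of_nonneg_left h1 (by positivity)
  have hεi : ∀ i, Δt * J i * (δ * Real.exp (T * Jstar)) ≤ Δx/2 * (μ i * Dmin i) := by
    intro i
    have hμ0 := (hμ i).1
    have hDm0 := (hD i).1
    have hJi := hJ i
    have hJiS := hJle i
    set Ex := Real.exp (T * Jstar) with hEx
    have hEx0 : 0 < Ex := Real.exp_pos _
    have hExinv : Real.exp (-T * Jstar) = Ex⁻¹ := by
      rw [hEx, ← Real.exp_neg]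
      congr 1
      ring
    have hδ2 : δ ≤ Δx / (2*Δt) * (μ i * Dmin i * Ex⁻¹ / Jstar) := by
      refine le_trans (le_trans hδsmall (min_le_right _ _)) ?_
      rw [← hExinv]
      exact mul_le_mul_of_nonneg_left (ciInf_le (Finite.bddBelow_range _) i) (by positivity)
    have h3 : Δt * J i * (δ * Ex) ≤ Δt * Jstar * ((Δx / (2*Δt) * (μ i * Dmin i * Ex⁻¹ / Jstar)) * Ex) := by
      apply mul_le_mul
      · exact mul_le_mul_of_nonneg_left hJiS (le_of_lt hΔt)
      · exact mul_le_mul_of_nonneg_right hδ2 (le_of_lt hEx0)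
      · positivity
      · positivity
    refine le_trans h3 (le_of_eq ?_)
    field_simp
    -- one-step Lyapunov decay
  have hstep : ∀ n, n < N → L (n+1) ≤ (1 - ν*Δt) * L n := by
    intro n hnN
    have hnN' : n ≤ N := le_of_lt hnN
    have hcore : ∀ i : Fin m, ∀ k, k ≤ K →
        (∑ j ∈ Finset.Icc 1 M, Real.exp (-(μ i) * ((j:ℝ)*Δx)) * (u i (n+1) j k)^2)
        ≤ (1 - ν*Δt) * ∑ j ∈ Finset.Icc 1 M, Real.exp (-(μ i) * ((j:ℝ)*Δx)) * (u i n j k)^2 := by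
      intro i k hk
      set E : ℕ → ℝ := fun j => Real.exp (-(μ i) * ((j:ℝ)*Δx)) with hE
      set D : ℕ → ℝ := fun j => Δt/Δx * Λ i (fun l => u l n j k) with hDdef
      have hEpos : ∀ j, 0 < E j := fun j => Real.exp_pos _
      have hDb' : ∀ j, j ≤ M → Dmin i ≤ D j ∧ D j ≤ Dmax i := fun j hj =>
        hDb _ (hmem n hnN' j hj k hk) i
      have hDpos : ∀ j, j ≤ M → 0 < D j := fun j hj => lt_of_lt_of_le (hD i).1 (hDb' j hj).1
      have hD1 : ∀ j, j ≤ M → D j ≤ 1 := fun j hj => le_trans (hDb' j hj).2 (hD i).2.2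
      have hconv : ∀ j, 1 ≤ j → j ≤ M →
          E j * (u i (n+1) j k)^2 ≤ E j * ((1 - D j) * (u i n j k)^2 + D j * (u i n (j-1) k)^2) := by
        intro j h1 hjM
        have hs := (hscheme n hnN i k hk).1 j h1 hjM
        have heq : u i (n+1) j k = (1 - D j) * u i n j k + D j * u i n (j-1) k := by
          rw [hs]; simp only [hDdef]; ring
        rw [heq]
        exact mul_le_mul_of_nonneg_left
          (convex_sq_aux _ _ _ (le_of_lt (hDpos j hjM)) (hD1 j hjM)) (le_of_lt (hEpos j))
      have hEs : ∀ j : ℕ, E (j+1) = E j * Real.exp (-(μ i) * Δx) := by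
        intro j
        simp only [hE]
        rw [← Real.exp_add]
        congr 1
        push_cast
        ring
      have hX1 : μ i * Δx * Real.exp (-(μ i)*Δx) ≤ 1 - Real.exp (-(μ i)*Δx) := by
        have h := exp_decay_aux (μ i * Δx) (mul_nonneg (le_of_lt (hμ i).1) (le_of_lt hΔx0))
        rw [show -(μ i) * Δx = -(μ i * Δx) by ring]
        exact h
      have hXle1 : Real.exp (-(μ i)*Δx) ≤ 1 := by
        apply Real.exp_le_one_iff.2
        nlinarith [(hμ i).1]
      have hint : ∀ j, 1 ≤ j → j + 1 ≤ M →
          E (j+1) * D (j+1) ≤ E j * D j - ν*Δt * E j := by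
        intro j h1 hjM
        have hm1 := hmem n hnN' (j+1) hjM k hk
        have hm2 := hmem n hnN' j (by omega) k hk
        have hDd : D (j+1) ≤ D j + Δx/2 * (μ i * Dmin i) := by
          have hlip := hLip _ hm1 _ hm2 i
          have hsupb : (⨆ l, |u l n (j+1) k - u l n j k|) ≤ δ * Real.exp (T*Jstar) * Δx := by
            apply ciSup_le
            intro l
            have hCc := hC n hnN' l k hk (j+1) (by omega) hjM
            simp only [Nat.add_sub_cancel] at hCc
            refine le_trans hCc ?_
            apply mul_le_mul_of_nonneg_right ?_ (le_of_lt hΔx0)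
            exact mul_le_mul_of_nonneg_left (hexpmono n hnN' l) (le_of_lt hδpos)
          have h2' : |D (j+1) - D j|
              = Δt/Δx * |Λ i (fun l => u l n (j+1) k) - Λ i (fun l => u l n j k)| := by
            simp only [hDdef]
            rw [← mul_sub, abs_mul, abs_of_pos hr0]
          have h3' : |D (j+1) - D j| ≤ Δx/2 * (μ i * Dmin i) := by
            rw [h2']
            calc Δt/Δx * |Λ i (fun l => u l n (j+1) k) - Λ i (fun l => u l n j k)|
                ≤ Δt/Δx * (J i * (δ * Real.exp (T*Jstar) * Δx)) := by
                  apply mul_le_mul_of_nonneg_left ?_ (le_of_lt hr0)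
                  exact le_trans hlip (mul_le_mul_of_nonneg_left hsupb (le_of_lt (hJ i)))
              _ = Δt * J i * (δ * Real.exp (T*Jstar)) := by field_simp
              _ ≤ Δx/2 * (μ i * Dmin i) := hεi i
          nlinarith [le_abs_self (D (j+1) - D j)]
        have hνi := hνΔt i
        set X := Real.exp (-(μ i)*Δx) with hXdef
        have hX0 : 0 < X := Real.exp_pos _
        have hDminj := (hDb' j (by omega)).1
        have hDm0 := (hD i).1
        have hμ0 := (hμ i).1
        have hsc : X * D (j+1) ≤ D j - ν*Δt := by
          nlinarith [mul_le_mul_of_nonneg_right hX1 (le_of_lt hDm0),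
            mul_le_mul_of_nonneg_left hDminj (by linarith : (0:ℝ) ≤ 1 - X),
            mul_le_mul_of_nonneg_left hDd (le_of_lt hX0)]
        rw [hEs j]
        nlinarith [mul_le_mul_of_nonneg_left hsc (le_of_lt (hEpos j))]
      -- telescoping function
      set H : ℕ → ℝ := fun j => if j = M then
          E M * D M * (u i n M k)^2 - ν*Δt*(E M * (u i n M k)^2)
        else E (j+1) * D (j+1) * (u i n j k)^2 with hHdef
      have hperj : ∀ j ∈ Finset.Icc 1 M,
          E j * (u i (n+1) j k)^2 ≤ (1-ν*Δt) * (E j * (u i n j k)^2) + (H (j-1) - H j) := by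
        intro j hj
        rw [Finset.mem_Icc] at hj
        obtain ⟨h1, hjM⟩ := hj
        rcases eq_or_lt_of_le hjM with hjM' | hlt
        · subst hjM'
          have hHj : H j = E j * D j * (u i n j k)^2 - ν*Δt*(E j * (u i n j k)^2) := by
            simp only [hHdef, if_pos rfl]
          have hj1 : j - 1 + 1 = j := by omega
          have hHj1 : H (j-1) = E j * D j * (u i n (j-1) k)^2 := by
            simp only [hHdef, if_neg (by omega : j - 1 ≠ j), hj1]
          rw [hHj, hHj1]
          have hc := hconv j h1 le_rfl
          linarith [hc]
        · have hHj : H j = E (j+1) * D (j+1) * (u i n j k)^2 := by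
            simp only [hHdef, if_neg (by omega : j ≠ M)]
          have hj1 : j - 1 + 1 = j := by omega
          have hHj1 : H (j-1) = E j * D j * (u i n (j-1) k)^2 := by
            simp only [hHdef, if_neg (by omega : j - 1 ≠ M), hj1]
          rw [hHj, hHj1]
          have hc := hconv j h1 hjM
          have hi := hint j h1 hlt
          linarith [hc, mul_le_mul_of_nonneg_right hi (sq_nonneg (u i n j k))]
      have hH0M : H 0 - H M ≤ 0 := by
        have hH0 : H 0 = E 1 * D 1 * (u i n 0 k)^2 := by
          simp only [hHdef, if_neg (by omega : (0:ℕ) ≠ M)]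
        have hHM : H M = E M * D M * (u i n M k)^2 - ν*Δt*(E M * (u i n M k)^2) := by
          simp only [hHdef, if_pos rfl]
        have hu0 : u i n 0 k = κ i * u i n M k := hbc n hnN' i k hk
        have hE1 : E 1 = Real.exp (-(μ i)*Δx) := by
          simp only [hE]; norm_num
        have hEM : E M = Real.exp (-(μ i)) := by
          simp only [hE]; rw [hMΔx, mul_one]
        rw [hH0, hHM, hu0, hE1, hEM]
        set X := Real.exp (-(μ i)*Δx) with hXdef
        set Y := Real.exp (-(μ i)) with hYdef
        have hX0 : 0 < X := Real.exp_pos _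
        have hY0 : 0 < Y := Real.exp_pos _
        have hXle1 : X ≤ 1 := hXle1
        have hYe : Y * Real.exp (μ i) = 1 := by
          rw [hYdef, ← Real.exp_add]; simp
        have hμ0 := (hμ i).1
        have hDm0 := (hD i).1
        have hDmax0 : 0 < Dmax i := lt_of_lt_of_le hDm0 (hD i).2.1
        have hκDm : κ i ^ 2 * Dmax i ≤ Dmin i * Y := by
          have heq : κ i ^ 2 * Dmax i = (κ i ^ 2 * Dmax i * Real.exp (μ i)) * Y := by
            rw [show (κ i ^ 2 * Dmax i * Real.exp (μ i)) * Y
                = κ i ^ 2 * Dmax i * (Y * Real.exp (μ i)) from by ring, hYe, mul_one]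
          rw [heq]
          exact mul_le_mul_of_nonneg_right (hκD i) (le_of_lt hY0)
        have hD1b := (hDb' 1 (by omega)).2
        have hDMb := (hDb' M le_rfl).1
        have hD1p := hDpos 1 (by omega)
        have hνi := hνΔt i
        set S := (u i n M k)^2 with hS
        have hS0 : 0 ≤ S := sq_nonneg _
        have hk0 := (hκ i).1
        have hX1 : μ i * Δx * X ≤ 1 - X := hX1
        have e1 : X * D 1 * (κ i * u i n M k)^2 ≤ X * (Dmin i * Y) * S := by
          have hsq : (κ i * u i n M k)^2 = κ i ^2 * S := by rw [hS]; ring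
          rw [hsq]
          have t1 : D 1 * κ i ^2 ≤ Dmax i * κ i ^2 :=
            mul_le_mul_of_nonneg_right hD1b (sq_nonneg _)
          have t2 : Dmax i * κ i ^2 ≤ Dmin i * Y := by rw [mul_comm]; exact hκDm
          calc X * D 1 * (κ i ^2 * S) = X * (D 1 * κ i ^2) * S := by ring
            _ ≤ X * (Dmin i * Y) * S := by
                apply mul_le_mul_of_nonneg_right ?_ hS0
                apply mul_le_mul_of_nonneg_left (le_trans t1 t2) (le_of_lt hX0)
        have key : ν*Δt ≤ D M - X * Dmin i := by
          nlinarith [mul_le_mul_of_nonneg_right hX1 (le_of_lt hDm0)]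
        linarith [e1, mul_le_mul_of_nonneg_left key (mul_nonneg (le_of_lt hY0) hS0)]
      have hsum := Finset.sum_le_sum hperj
      rw [Finset.sum_add_distrib, telescope_aux H M] at hsum
      calc (∑ j ∈ Finset.Icc 1 M, E j * (u i (n+1) j k)^2)
          ≤ (∑ j ∈ Finset.Icc 1 M, (1-ν*Δt) * (E j * (u i n j k)^2)) + (H 0 - H M) := hsum
        _ ≤ ∑ j ∈ Finset.Icc 1 M, (1-ν*Δt) * (E j * (u i n j k)^2) := by linarith
        _ = (1-ν*Δt) * ∑ j ∈ Finset.Icc 1 M, E j * (u i n j k)^2 := by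
            rw [Finset.mul_sum]
    -- assemble
    have hrearr : ∀ (w : Fin m → ℕ → ℕ → ℝ),
        (∑ i : Fin m, ∑ j ∈ Finset.Icc 1 M, ∑ k ∈ Finset.Icc 1 K, w i j k * ρ k)
        = ∑ i : Fin m, ∑ k ∈ Finset.Icc 1 K, (∑ j ∈ Finset.Icc 1 M, w i j k) * ρ k := by
      intro w
      refine Finset.sum_congr rfl (fun i _ => ?_)
      rw [Finset.sum_comm]
      exact Finset.sum_congr rfl (fun k _ => (Finset.sum_mul _ _ _).symm)
    have h1 : (∑ i : Fin m, ∑ j ∈ Finset.Icc 1 M, ∑ k ∈ Finset.Icc 1 K,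
          Real.exp (-(μ i) * ((j:ℝ)*Δx)) * (u i (n+1) j k)^2 * ρ k)
        = ∑ i : Fin m, ∑ k ∈ Finset.Icc 1 K,
          (∑ j ∈ Finset.Icc 1 M, Real.exp (-(μ i) * ((j:ℝ)*Δx)) * (u i (n+1) j k)^2) * ρ k :=
      hrearr (fun i j k => Real.exp (-(μ i) * ((j:ℝ)*Δx)) * (u i (n+1) j k)^2)
    have h2 : (∑ i : Fin m, ∑ j ∈ Finset.Icc 1 M, ∑ k ∈ Finset.Icc 1 K,
          Real.exp (-(μ i) * ((j:ℝ)*Δx)) * (u i n j k)^2 * ρ k)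
        = ∑ i : Fin m, ∑ k ∈ Finset.Icc 1 K,
          (∑ j ∈ Finset.Icc 1 M, Real.exp (-(μ i) * ((j:ℝ)*Δx)) * (u i n j k)^2) * ρ k :=
      hrearr (fun i j k => Real.exp (-(μ i) * ((j:ℝ)*Δx)) * (u i n j k)^2)
    have hmono : (∑ i : Fin m, ∑ k ∈ Finset.Icc 1 K,
          (∑ j ∈ Finset.Icc 1 M, Real.exp (-(μ i) * ((j:ℝ)*Δx)) * (u i (n+1) j k)^2) * ρ k)
        ≤ ∑ i : Fin m, ∑ k ∈ Finset.Icc 1 K,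
          ((1 - ν*Δt) * ∑ j ∈ Finset.Icc 1 M, Real.exp (-(μ i) * ((j:ℝ)*Δx)) * (u i n j k)^2) * ρ k := by
      apply Finset.sum_le_sum
      intro i _
      apply Finset.sum_le_sum
      intro k hkk
      exact mul_le_mul_of_nonneg_right (hcore i k (Finset.mem_Icc.1 hkk).2) (hρ k)
    calc L (n+1)
        = Δx * Δξ * ∑ i : Fin m, ∑ k ∈ Finset.Icc 1 K,
            (∑ j ∈ Finset.Icc 1 M, Real.exp (-(μ i) * ((j:ℝ)*Δx)) * (u i (n+1) j k)^2) * ρ k := by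
          rw [hL (n+1), h1]
      _ ≤ Δx * Δξ * ∑ i : Fin m, ∑ k ∈ Finset.Icc 1 K,
            ((1 - ν*Δt) * ∑ j ∈ Finset.Icc 1 M, Real.exp (-(μ i) * ((j:ℝ)*Δx)) * (u i n j k)^2) * ρ k :=
          mul_le_mul_of_nonneg_left hmono (by positivity)
      _ = (1 - ν*Δt) * (Δx * Δξ * ∑ i : Fin m, ∑ k ∈ Finset.Icc 1 K,
            (∑ j ∈ Finset.Icc 1 M, Real.exp (-(μ i) * ((j:ℝ)*Δx)) * (u i n j k)^2) * ρ k) := by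
          simp only [mul_assoc, ← Finset.mul_sum]
          ring
      _ = (1 - ν*Δt) * L n := by rw [hL n, h2]
  -- nonnegativity of L
  have hL0 : ∀ n', 0 ≤ L n' := by
    intro n'
    rw [hL n']
    apply mul_nonneg (by positivity)
    apply Finset.sum_nonneg
    intro i _
    apply Finset.sum_nonneg
    intro j _
    apply Finset.sum_nonneg
    intro k _
    have := hρ k
    positivity
  -- final induction
  intro n
  induction n with
  | zero => intro _; norm_num
  | succ n ih =>
    intro hn1
    have hnN : n < N := by omega
    have h1 := hstep n hnN
    have h2 : (1 - ν*Δt) * L n ≤ Real.exp (-(ν*Δt)) * L n :=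
      mul_le_mul_of_nonneg_right (by nlinarith [Real.add_one_le_exp (-(ν*Δt))]) (hL0 n)
    have h3 := ih (by omega)
    have h4 : Real.exp (-(ν*Δt)) * L n ≤ Real.exp (-(ν*Δt)) * (Real.exp (-ν*((n:ℝ)*Δt)) * L 0) :=
      mul_le_mul_of_nonneg_left h3 (le_of_lt (Real.exp_pos _))
    have h5 : Real.exp (-(ν*Δt)) * (Real.exp (-ν*((n:ℝ)*Δt)) * L 0)
        = Real.exp (-ν*(((n+1:ℕ):ℝ)*Δt)) * L 0 := by
      rw [← mul_assoc, ← Real.exp_add]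
      congr 2
      push_cast
      ring
    calc L (n+1) ≤ (1 - ν*Δt) * L n := h1
      _ ≤ Real.exp (-(ν*Δt)) * L n := h2
      _ ≤ Real.exp (-(ν*Δt)) * (Real.exp (-ν*((n:ℝ)*Δt)) * L 0) := h4
      _ = Real.exp (-ν*(((n+1:ℕ):ℝ)*Δt)) * L 0 := h5
end

section
/- Exponential decay of the discrete Lyapunov function with negative feedback gains (Remark after Theorem 1): under the same hypotheses as Theorem 1 except that the feedback gains satisfy −√(D^min_i/D^max_i) < κ_i < 0 and 0 < μ_i ≤ ln(D^min_i/(D^max_i·κ_i²)) for every i = 1,…,m, the discrete Lyapunov function still satisfies L^n ≤ e^{−ν·t^n}·L^0 for all n = 0,…,N, where ν := (Δx/(2Δt))·min_i {μ_i·D^min_i·e^{−μ_i·Δx}}. In detail the hypotheses are: 0 < (Δt/Δx)·Λ_i(v) ≤ 1 for every v ∈ M_δ(0); |Λ_i(u) − Λ_i(v)| ≤ J_i·max_ℓ |u^{(ℓ)} − v^{(ℓ)}| on M_δ(0) with J_i > 0, J* := max_i J_i, T := N·Δt; |u^{(i),0}_{j,k}| ≤ δ, |u^{(i),0}_{j,k}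 − u^{(i),0}_{j−1,k}| ≤ δ·Δx, u^{(i),0}_{0,k} = κ_i·u^{(i),0}_{M,k}, and |u^{(i),n}_{1,k} − u^{(i),n}_{0,k}| ≤ δ·e^{n·Δt·J_i}·Δx; δ ≤ min{1, (Δx/(2Δt))·min_i [μ_i·D^min_i·e^{−T·J*}/J*]} and δ·e^{T·J*} ≤ 1; ρ_k ≥ 0. -/
set_option maxHeartbeats 1000000

lemma aux_convex_sq (x y lam : ℝ) (h0 : 0 ≤ lam) (h1 : lam ≤ 1) :
    ((1-lam)*x + lam*y)^2 ≤ (1-lam)*x^2 + lam*y^2 := by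
  nlinarith [sq_nonneg (x-y), mul_nonneg (mul_nonneg h0 (by linarith : (0:ℝ) ≤ 1-lam)) (sq_nonneg (x-y))]

lemma aux_sum_shift (M : ℕ) (hM : 1 ≤ M) (f : ℕ → ℝ) :
    ∑ j ∈ Finset.Icc 1 M, f (j-1) = ∑ j ∈ Finset.Icc 0 (M-1), f j := by
  refine Finset.sum_nbij' (fun j => j - 1) (fun j => j + 1) ?_ ?_ ?_ ?_ ?_ <;>
    simp only [Finset.mem_Icc] <;> intro a ha <;> first | omega | trivial

lemma aux_Icc_bot (M' : ℕ) (f : ℕ → ℝ) :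
    ∑ j ∈ Finset.Icc 0 M', f j = f 0 + ∑ j ∈ Finset.Icc 1 M', f j := by
  rw [show Finset.Icc 0 M' = insert 0 (Finset.Icc 1 M') by ext x; simp [Finset.mem_Icc]; omega,
    Finset.sum_insert (by simp)]

/-- Abstract one-step decay estimate for the weighted quadratic Lyapunov sum. -/
lemma aux_decay (M' : ℕ) (s q Dmn Dmx κ2 eμ U2 : ℝ) (lmb a unew : ℕ → ℝ)
    (hs : 0 < s) (hqpos : 0 < q) (hq : q * (1 + s) ≤ 1) (hDmn : 0 < Dmn)
    (ha : ∀ j, 0 ≤ a j)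
    (hlmblo : ∀ j, j ≤ M'+1 → Dmn ≤ lmb j)
    (hlmbhi : ∀ j, j ≤ M'+1 → lmb j ≤ Dmx)
    (hpoint : ∀ j, 1 ≤ j → j ≤ M'+1 → unew j ≤ a j + lmb j * (q * a (j-1) - a j))
    (hdiff : ∀ j, 1 ≤ j → j ≤ M' → lmb (j+1) - lmb j ≤ s * Dmn / 2)
    (ha0 : a 0 = κ2 * U2) (haM : a (M'+1) = eμ * U2) (hU2 : 0 ≤ U2)
    (hκ2 : 0 ≤ κ2) (heμ : 0 ≤ eμ)
    (hgain : Dmx * κ2 ≤ Dmn * eμ) :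
    (∑ j ∈ Finset.Icc 1 (M'+1), unew j)
      ≤ (1 - s * Dmn * q / 2) * ∑ j ∈ Finset.Icc 1 (M'+1), a j := by
  set c : ℝ := s * Dmn * q with hc
  have hcpos : 0 < c := by positivity
  set S : ℝ := ∑ j ∈ Finset.Icc 1 (M'+1), a j with hS
  -- step 1: pointwise convexity bound summed up
  have h1 : (∑ j ∈ Finset.Icc 1 (M'+1), unew j)
      ≤ S + ∑ j ∈ Finset.Icc 1 (M'+1), lmb j * (q * a (j-1) - a j) := by
    rw [hS, ← Finset.sum_add_distrib]
    refine Finset.sum_le_sum fun j hj => ?_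
    rw [Finset.mem_Icc] at hj
    exact hpoint j hj.1 hj.2
  -- step 2: rewrite the correction sum (Abel-type rearrangement)
  have hshift : (∑ j ∈ Finset.Icc 1 (M'+1), lmb j * (q * a (j-1)))
      = ∑ j ∈ Finset.Icc 0 M', q * lmb (j+1) * a j := by
    rw [show (∑ j ∈ Finset.Icc 0 M', q * lmb (j+1) * a j)
          = ∑ j ∈ Finset.Icc 0 ((M'+1)-1), q * lmb (j+1) * a j by norm_num,
      ← aux_sum_shift (M'+1) (by omega) (fun j => q * lmb (j+1) * a j)]
    refine Finset.sum_congr rfl fun j hj => ?_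
    rw [Finset.mem_Icc] at hj
    have hj1 : j - 1 + 1 = j := by omega
    simp only [hj1]
    ring
  have hE : (∑ j ∈ Finset.Icc 1 (M'+1), lmb j * (q * a (j-1) - a j))
      = q * lmb 1 * a 0 + (∑ j ∈ Finset.Icc 1 M', (q * lmb (j+1) - lmb j) * a j)
        - lmb (M'+1) * a (M'+1) := by
    have e1 : ∀ j, lmb j * (q * a (j-1) - a j)
        = lmb j * (q * a (j-1)) - lmb j * a j := fun j => by ring
    have e2 : ∀ j, (q * lmb (j+1) - lmb j) * a j
        = q * lmb (j+1) * a j - lmb j * a j := fun j => by ring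
    simp only [e1]
    rw [Finset.sum_sub_distrib, hshift, aux_Icc_bot,
      Finset.sum_Icc_succ_top (by omega : 1 ≤ M'+1)]
    simp only [e2]
    rw [Finset.sum_sub_distrib]
    ring
  -- step 3: coefficient bound in the interior
  have hqle1 : q ≤ 1 := by nlinarith
  have hcoef : ∀ j, 1 ≤ j → j ≤ M' → q * lmb (j+1) - lmb j ≤ -(c/2) := by
    intro j hj1 hjM
    have i1 : q * (lmb (j+1) - lmb j) ≤ q * (s * Dmn / 2) :=
      mul_le_mul_of_nonneg_left (hdiff j hj1 hjM) hqpos.le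
    have i2 : (q - 1) * lmb j ≤ (q - 1) * Dmn := by
      have := hlmblo j (by omega)
      nlinarith
    have i3 : q * Dmn + q * s * Dmn ≤ Dmn := by nlinarith
    have : q * lmb (j+1) - lmb j = q * (lmb (j+1) - lmb j) + (q - 1) * lmb j := by ring
    rw [this, hc]
    nlinarith
  have hmid : (∑ j ∈ Finset.Icc 1 M', (q * lmb (j+1) - lmb j) * a j)
      ≤ -(c/2) * (S - a (M'+1)) := by
    have : (∑ j ∈ Finset.Icc 1 M', (q * lmb (j+1) - lmb j) * a j)
        ≤ ∑ j ∈ Finset.Icc 1 M', -(c/2) * a j := by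
      refine Finset.sum_le_sum fun j hj => ?_
      rw [Finset.mem_Icc] at hj
      exact mul_le_mul_of_nonneg_right (hcoef j hj.1 hj.2) (ha j)
    refine this.trans_eq ?_
    rw [← Finset.mul_sum]
    congr 1
    rw [hS, Finset.sum_Icc_succ_top (by omega : 1 ≤ M'+1)]
    ring
  -- step 4: boundary terms
  have hbdry : q * lmb 1 * a 0 + (c/2) * a (M'+1) - lmb (M'+1) * a (M'+1) ≤ 0 := by
    rw [ha0, haM]
    have b1 : q * lmb 1 * κ2 ≤ q * (Dmn * eμ) := by
      have t1 : lmb 1 * κ2 ≤ Dmx * κ2 :=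
        mul_le_mul_of_nonneg_right (hlmbhi 1 (by omega)) hκ2
      have t2 : lmb 1 * κ2 ≤ Dmn * eμ := t1.trans hgain
      calc q * lmb 1 * κ2 = q * (lmb 1 * κ2) := by ring
        _ ≤ q * (Dmn * eμ) := mul_le_mul_of_nonneg_left t2 hqpos.le
    have b2 : q * (Dmn * eμ) + (c/2) * eμ ≤ Dmn * eμ := by
      rw [hc]
      nlinarith [mul_le_mul_of_nonneg_right hq (mul_nonneg hDmn.le heμ)]
    have b3 : Dmn * eμ ≤ lmb (M'+1) * eμ :=
      mul_le_mul_of_nonneg_right (hlmblo (M'+1) le_rfl) heμ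
    have co : q * lmb 1 * κ2 + (c/2) * eμ - lmb (M'+1) * eμ ≤ 0 := by linarith
    have := mul_le_mul_of_nonneg_right co hU2
    nlinarith [this]
  -- assemble
  have hEle : (∑ j ∈ Finset.Icc 1 (M'+1), lmb j * (q * a (j-1) - a j)) ≤ -(c/2) * S := by
    rw [hE]
    have := ha (M'+1)
    nlinarith [hmid, hbdry]
  calc (∑ j ∈ Finset.Icc 1 (M'+1), unew j) ≤ S + ∑ j ∈ Finset.Icc 1 (M'+1), lmb j * (q * a (j-1) - a j) := h1
    _ ≤ S + -(c/2) * S := by linarith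
    _ = (1 - s * Dmn * q / 2) * S := by rw [hc]; ring




/-- Exponential decay of the discrete Lyapunov function with negative
feedback gains `−√(D^min_i/D^max_i) < κ_i < 0` (Remark after Theorem 1); all other
hypotheses are as in Theorem 1.  Here `u i n j k` denotes
`u^{(i),n}_{j,k}`, `Δx = 1/M`, `x_j = j·Δx`, `t^n = n·Δt`,
`M_δ(0) = {v : |v^{(i)}| ≤ δ ∀ i}`,
`D^max_i = (Δt/Δx)·sup_{v∈M_δ(0)} Λ_i(v)`, `D^min_i = (Δt/Δx)·inf_{v∈M_δ(0)} Λ_i(v)`,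
`L^n = Δx·Δξ·Σ_{i,j,k} e^{−μ_i·x_j}·(u^{(i),n}_{j,k})²·ρ_k` and
`ν = (Δx/(2Δt))·min_i μ_i·D^min_i·e^{−μ_i·Δx}`. -/
theorem lyapunov_exponential_decay_negative_gains
    (m M K N : ℕ) (hm : 1 ≤ m) (hM : 2 ≤ M) (hK : 1 ≤ K)
    (Δx Δt Δξ δ : ℝ) (hΔx : Δx = 1 / M) (hΔt : 0 < Δt) (hΔξ : 0 < Δξ) (hδpos : 0 < δ)
    (Λ : Fin m → (Fin m → ℝ) → ℝ) (κ μ J : Fin m → ℝ) (ρ : ℕ → ℝ)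
    (u : Fin m → ℕ → ℕ → ℕ → ℝ)
    (Mδ : Set (Fin m → ℝ)) (hMδ : Mδ = {v | ∀ i, |v i| ≤ δ})
    (Dmin Dmax : Fin m → ℝ)
    (hDmin : ∀ i, Dmin i = Δt / Δx * sInf ((fun v => Λ i v) '' Mδ))
    (hDmax : ∀ i, Dmax i = Δt / Δx * sSup ((fun v => Λ i v) '' Mδ))
    (Jstar T : ℝ) (hJstar : Jstar = ⨆ i, J i) (hT : T = N * Δt)
    -- (i) the CFL-type condition, so that 0 < D^min_i ≤ D^max_i ≤ 1
    (hCFL : ∀ v ∈ Mδ, ∀ i, 0 < Δt / Δx * Λ i v ∧ Δt / Δx * Λ i v ≤ 1)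
    (hD : ∀ i, 0 < Dmin i ∧ Dmin i ≤ Dmax i ∧ Dmax i ≤ 1)
    -- (ii) Lipschitz bounds with constants J_i > 0
    (hJ : ∀ i, 0 < J i)
    (hLip : ∀ v ∈ Mδ, ∀ w ∈ Mδ, ∀ i, |Λ i v - Λ i w| ≤ J i * ⨆ l, |v l - w l|)
    -- (iii) gains and Lyapunov weights
    (hκ : ∀ i, -Real.sqrt (Dmin i / Dmax i) < κ i ∧ κ i < 0)
    (hμ : ∀ i, 0 < μ i ∧ μ i ≤ Real.log (Dmin i / (Dmax i * κ i ^ 2)))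
    -- (iv) initial and boundary bounds
    (hinit : ∀ i, ∀ j, 1 ≤ j → j ≤ M → ∀ k, k ≤ K → |u i 0 j k| ≤ δ)
    (hinitdiff : ∀ i, ∀ j, 1 ≤ j → j ≤ M → ∀ k, k ≤ K →
      |u i 0 j k - u i 0 (j-1) k| ≤ δ * Δx)
    (hbc0 : ∀ i, ∀ k, k ≤ K → u i 0 0 k = κ i * u i 0 M k)
    (hinflow : ∀ i, ∀ k, k ≤ K → ∀ n, n ≤ N →
      |u i n 1 k - u i n 0 k| ≤ δ * Real.exp (n * Δt * J i) * Δx)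
    -- (v) smallness of δ
    (hδsmall : δ ≤ min 1 (Δx / (2 * Δt) * ⨅ i, μ i * Dmin i * Real.exp (-T * Jstar) / Jstar))
    (hδT : δ * Real.exp (T * Jstar) ≤ 1)
    -- (vi) nonnegative weights
    (hρ : ∀ k, 0 ≤ ρ k)
    -- the upwind scheme with feedback boundary update
    (hscheme : ∀ n, n < N → ∀ i, ∀ k, k ≤ K →
      (∀ j, 1 ≤ j → j ≤ M →
        u i (n+1) j k =
          u i n j k - Δt / Δx * Λ i (fun l => u l n j k) * (u i n j k - u i n (j-1) k)) ∧
      u i (n+1) 0 k = κ i * u i (n+1) M k)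
    -- the discrete Lyapunov function and the decay rate
    (L : ℕ → ℝ)
    (hL : ∀ n, L n = Δx * Δξ * ∑ i : Fin m, ∑ j ∈ Finset.Icc 1 M, ∑ k ∈ Finset.Icc 1 K,
      Real.exp (-(μ i) * ((j : ℝ) * Δx)) * (u i n j k) ^ 2 * ρ k)
    (ν : ℝ) (hν : ν = Δx / (2 * Δt) * ⨅ i, μ i * Dmin i * Real.exp (-(μ i) * Δx)) :
    ∀ n, n ≤ N → L n ≤ Real.exp (-ν * (n * Δt)) * L 0 := by
  haveI : Nonempty (Fin m) := ⟨⟨0, hm⟩⟩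
  have hMpos : (0:ℝ) < M := by exact_mod_cast Nat.lt_of_lt_of_le (by norm_num) hM
  have hΔxpos : 0 < Δx := by rw [hΔx]; positivity
  have hMΔx : (M:ℝ) * Δx = 1 := by rw [hΔx]; field_simp
  have hr : 0 < Δt / Δx := div_pos hΔt hΔxpos
  have hJle : ∀ i, J i ≤ Jstar := by
    intro i; rw [hJstar]
    exact le_ciSup (Set.Finite.bddAbove (Set.finite_range J)) i
  have hJstarpos : 0 < Jstar := lt_of_lt_of_le (hJ ⟨0, hm⟩) (hJle _)
  have hmem : ∀ (v : Fin m → ℝ), (∀ l, |v l| ≤ δ) → v ∈ Mδ := by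
    intro v hv; rw [hMδ]; exact hv
  -- bounds on the CFL numbers
  have hlam : ∀ v ∈ Mδ, ∀ i, Dmin i ≤ Δt / Δx * Λ i v ∧ Δt / Δx * Λ i v ≤ Dmax i := by
    intro v hv i
    constructor
    · rw [hDmin i]
      apply mul_le_mul_of_nonneg_left _ hr.le
      apply csInf_le
      · refine ⟨0, fun y hy => ?_⟩
        obtain ⟨w, hw, rfl⟩ := hy
        show (0:ℝ) ≤ Λ i w
        nlinarith [(hCFL w hw i).1, hr]
      · exact Set.mem_image_of_mem _ hv
    · rw [hDmax i]
      apply mul_le_mul_of_nonneg_left _ hr.le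
      apply le_csSup
      · refine ⟨(Δt/Δx)⁻¹, fun y hy => ?_⟩
        obtain ⟨w, hw, rfl⟩ := hy
        show Λ i w ≤ (Δt/Δx)⁻¹
        have h2 : Δt/Δx * Λ i w ≤ Δt/Δx * (Δt/Δx)⁻¹ := by
          rw [mul_inv_cancel₀ hr.ne']; exact (hCFL w hw i).2
        exact le_of_mul_le_mul_left h2 hr
      · exact Set.mem_image_of_mem _ hv
  -- |κ i| ≤ 1
  have hκabs : ∀ i, |κ i| ≤ 1 := by
    intro i
    have h1 := (hκ i).1
    have h2 := (hκ i).2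
    have hs : Real.sqrt (Dmin i / Dmax i) ≤ 1 := by
      rw [show (1:ℝ) = Real.sqrt 1 by rw [Real.sqrt_one]]
      apply Real.sqrt_le_sqrt
      rw [div_le_one (lt_of_lt_of_le (hD i).1 (hD i).2.1)]
      exact (hD i).2.1
    rw [abs_le]; constructor <;> nlinarith
  -- the joint invariance / discrete-gradient induction
  have key : ∀ n, n ≤ N →
      (∀ i k, k ≤ K → ∀ j, j ≤ M → |u i n j k| ≤ δ) ∧
      (∀ i k, k ≤ K → ∀ j, 1 ≤ j → j ≤ M →
        |u i n j k - u i n (j-1) k| ≤ δ * Real.exp (n * Δt * Jstar) * Δx) := by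
    intro n
    induction n with
    | zero =>
      intro _
      constructor
      · intro i k hk j hj
        rcases Nat.eq_zero_or_pos j with rfl | hj1
        · rw [hbc0 i k hk, abs_mul]
          calc |κ i| * |u i 0 M k| ≤ 1 * δ :=
                mul_le_mul (hκabs i) (hinit i M (by omega) le_rfl k hk) (abs_nonneg _) zero_le_one
            _ = δ := one_mul δ
        · exact hinit i j hj1 hj k hk
      · intro i k hk j hj1 hjM
        calc |u i 0 j k - u i 0 (j-1) k| ≤ δ * Δx := hinitdiff i j hj1 hjM k hk
          _ = δ * Real.exp ((0:ℕ) * Δt * Jstar) * Δx := by norm_num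
    | succ n ih =>
      intro hn1
      have hnN : n < N := by omega
      have ih' := ih (by omega)
      -- all state vectors at time n lie in Mδ
      have hvmem : ∀ j, j ≤ M → ∀ k, k ≤ K → (fun l => u l n j k) ∈ Mδ :=
        fun j hj k hk => hmem _ (fun l => ih'.1 l k hk j hj)
      -- interior bound at time n+1
      have hbnd1 : ∀ i k, k ≤ K → ∀ j, 1 ≤ j → j ≤ M → |u i (n+1) j k| ≤ δ := by
        intro i k hk j hj1 hjM
        have hsch := (hscheme n hnN i k hk).1 j hj1 hjM
        set lam := Δt / Δx * Λ i (fun l => u l n j k) with hlamdef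
        have h01 := hCFL _ (hvmem j hjM k hk) i
        have heq : u i (n+1) j k = (1 - lam) * u i n j k + lam * u i n (j-1) k := by
          rw [hsch]; ring
        rw [heq]
        have hA := ih'.1 i k hk j hjM
        have hB := ih'.1 i k hk (j-1) (by omega)
        calc |(1-lam) * u i n j k + lam * u i n (j-1) k|
            ≤ |(1-lam) * u i n j k| + |lam * u i n (j-1) k| := abs_add_le _ _
          _ = (1-lam) * |u i n j k| + lam * |u i n (j-1) k| := by
              rw [abs_mul, abs_mul, abs_of_nonneg (by linarith [h01.2] : (0:ℝ) ≤ 1 - lam),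
                abs_of_nonneg h01.1.le]
          _ ≤ (1-lam) * δ + lam * δ :=
              add_le_add (mul_le_mul_of_nonneg_left hA (by linarith [h01.2]))
                (mul_le_mul_of_nonneg_left hB h01.1.le)
          _ = δ := by ring
      refine ⟨?_, ?_⟩
      · intro i k hk j hj
        rcases Nat.eq_zero_or_pos j with rfl | hj1
        · rw [(hscheme n hnN i k hk).2, abs_mul]
          calc |κ i| * |u i (n+1) M k| ≤ 1 * δ :=
                mul_le_mul (hκabs i) (hbnd1 i k hk M (by omega) le_rfl) (abs_nonneg _) zero_le_one
            _ = δ := one_mul δ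
        · exact hbnd1 i k hk j hj1 hj
      · intro i k hk j hj1 hjM
        rcases Nat.lt_or_ge j 2 with hj2 | hj2
        · -- j = 1 : use the inflow hypothesis
          have hj1' : j = 1 := by omega
          subst hj1'
          have hin := hinflow i k hk (n+1) hn1
          have : u i (n+1) (1-1) k = u i (n+1) 0 k := by norm_num
          rw [this]
          refine hin.trans ?_
          have hmono : (((n+1):ℕ):ℝ) * Δt * J i ≤ (((n+1):ℕ):ℝ) * Δt * Jstar :=
            mul_le_mul_of_nonneg_left (hJle i) (by positivity)
          have hmm := Real.exp_le_exp.2 hmono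
          exact mul_le_mul_of_nonneg_right (mul_le_mul_of_nonneg_left hmm hδpos.le) hΔxpos.le
        · -- j ≥ 2 : propagate the discrete gradient bound
          have hsch1 := (hscheme n hnN i k hk).1 j (by omega) hjM
          have hsch2 := (hscheme n hnN i k hk).1 (j-1) (by omega) (by omega)
          set lam1 := Δt / Δx * Λ i (fun l => u l n j k) with h1d
          set lam2 := Δt / Δx * Λ i (fun l => u l n (j-1) k) with h2d
          have h01 := hCFL _ (hvmem j hjM k hk) i
          have h02 := hCFL _ (hvmem (j-1) (by omega) k hk) i
          rw [← h1d] at h01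
          rw [← h2d] at h02
          have heq : u i (n+1) j k - u i (n+1) (j-1) k
              = (1 - lam1) * (u i n j k - u i n (j-1) k)
                + lam2 * (u i n (j-1) k - u i n (j-1-1) k) := by
            rw [hsch1, hsch2]; ring
          set D := δ * Real.exp ((n:ℝ) * Δt * Jstar) * Δx with hDdef
          have hDpos : 0 < D := by positivity
          have hd1 : |u i n j k - u i n (j-1) k| ≤ D := ih'.2 i k hk j (by omega) hjM
          have hd2 : |u i n (j-1) k - u i n (j-1-1) k| ≤ D :=
            ih'.2 i k hk (j-1) (by omega) (by omega)
          have hsup : (⨆ l, |u l n (j-1) k - u l n j k|) ≤ D := by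
            apply ciSup_le
            intro l
            rw [abs_sub_comm]
            exact ih'.2 l k hk j (by omega) hjM
          have hlip := hLip _ (hvmem (j-1) (by omega) k hk) _ (hvmem j hjM k hk) i
          have hlamdiff : lam2 - lam1 ≤ Δt / Δx * (J i * D) := by
            have h3 : |Λ i (fun l => u l n (j-1) k) - Λ i (fun l => u l n j k)| ≤ J i * D :=
              hlip.trans (mul_le_mul_of_nonneg_left hsup (hJ i).le)
            have h4 : Λ i (fun l => u l n (j-1) k) - Λ i (fun l => u l n j k) ≤ J i * D :=
              (le_abs_self _).trans h3
            calc lam2 - lam1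
                = Δt/Δx * (Λ i (fun l => u l n (j-1) k) - Λ i (fun l => u l n j k)) := by
                  rw [h1d, h2d]; ring
              _ ≤ Δt/Δx * (J i * D) := mul_le_mul_of_nonneg_left h4 hr.le
          have hδe : δ * Real.exp ((n:ℝ) * Δt * Jstar) ≤ 1 := by
            have hee : Real.exp ((n:ℝ) * Δt * Jstar) ≤ Real.exp (T * Jstar) := by
              apply Real.exp_le_exp.2
              apply mul_le_mul_of_nonneg_right _ hJstarpos.le
              rw [hT]
              have hnn : (n:ℝ) ≤ N := by exact_mod_cast (by omega : n ≤ N)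
              nlinarith
            nlinarith [hδpos, Real.exp_pos ((n:ℝ)*Δt*Jstar)]
          have hstep : Δt / Δx * (J i * D) ≤ Δt * Jstar := by
            have he1 : Δt / Δx * (J i * D) = Δt * (J i * (δ * Real.exp ((n:ℝ)*Δt*Jstar))) := by
              rw [hDdef]; field_simp
            rw [he1]
            have he2 : J i * (δ * Real.exp ((n:ℝ)*Δt*Jstar)) ≤ Jstar := by
              calc J i * (δ * Real.exp ((n:ℝ)*Δt*Jstar)) ≤ Jstar * 1 :=
                  mul_le_mul (hJle i) hδe (by positivity) hJstarpos.le
                _ = Jstar := mul_one _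
            exact mul_le_mul_of_nonneg_left he2 hΔt.le
          calc |u i (n+1) j k - u i (n+1) (j-1) k|
              ≤ (1 - lam1) * D + lam2 * D := by
                rw [heq]
                calc |(1-lam1) * (u i n j k - u i n (j-1) k)
                      + lam2 * (u i n (j-1) k - u i n (j-1-1) k)|
                    ≤ |(1-lam1) * (u i n j k - u i n (j-1) k)|
                      + |lam2 * (u i n (j-1) k - u i n (j-1-1) k)| := abs_add_le _ _
                  _ = (1-lam1) * |u i n j k - u i n (j-1) k|
                      + lam2 * |u i n (j-1) k - u i n (j-1-1) k| := by
                      rw [abs_mul, abs_mul,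
                        abs_of_nonneg (by linarith [h01.2] : (0:ℝ) ≤ 1 - lam1),
                        abs_of_nonneg h02.1.le]
                  _ ≤ (1 - lam1) * D + lam2 * D :=
                      add_le_add (mul_le_mul_of_nonneg_left hd1 (by linarith [h01.2]))
                        (mul_le_mul_of_nonneg_left hd2 h02.1.le)
            _ = (1 + (lam2 - lam1)) * D := by ring
            _ ≤ (1 + Δt * Jstar) * D :=
                mul_le_mul_of_nonneg_right (by linarith [hlamdiff.trans hstep]) hDpos.le
            _ ≤ Real.exp (Δt * Jstar) * D := by
                have := Real.add_one_le_exp (Δt * Jstar)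
                exact mul_le_mul_of_nonneg_right (by linarith) hDpos.le
            _ = δ * Real.exp ((((n+1):ℕ):ℝ) * Δt * Jstar) * Δx := by
                have hcast : (((n+1):ℕ):ℝ) * Δt * Jstar = Δt * Jstar + (n:ℝ) * Δt * Jstar := by
                  push_cast; ring
                rw [hDdef, hcast, Real.exp_add]; ring
  -- boundary condition at every time level
  have hBC : ∀ n, n ≤ N → ∀ i k, k ≤ K → u i n 0 k = κ i * u i n M k := by
    intro n hn i k hk
    cases n with
    | zero => exact hbc0 i k hk
    | succ p => exact (hscheme p (by omega) i k hk).2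
  -- split off the top index
  obtain ⟨M', rfl⟩ : ∃ M', M = M' + 1 := ⟨M - 1, by omega⟩
  have hDmaxpos : ∀ i, 0 < Dmax i := fun i => lt_of_lt_of_le (hD i).1 (hD i).2.1
  have hμpos : ∀ i, 0 < μ i := fun i => (hμ i).1
  -- gain inequality
  have hκD : ∀ i, Dmax i * κ i ^ 2 ≤ Dmin i * Real.exp (-(μ i)) := by
    intro i
    have hκ2 : 0 < κ i ^ 2 := by nlinarith [(hκ i).2]
    have hden : 0 < Dmax i * κ i ^ 2 := mul_pos (hDmaxpos i) hκ2
    have hlog : Real.exp (μ i) ≤ Dmin i / (Dmax i * κ i ^ 2) := by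
      calc Real.exp (μ i) ≤ Real.exp (Real.log (Dmin i / (Dmax i * κ i ^ 2))) :=
            Real.exp_le_exp.2 (hμ i).2
        _ = _ := Real.exp_log (div_pos (hD i).1 hden)
    rw [le_div_iff₀ hden] at hlog
    have h6 := mul_le_mul_of_nonneg_left hlog (Real.exp_pos (-(μ i))).le
    rw [← mul_assoc, ← Real.exp_add, neg_add_cancel, Real.exp_zero, one_mul] at h6
    linarith [h6]
  -- exp inequality : q (1+s) ≤ 1
  have hq1 : ∀ i, Real.exp (-(μ i) * Δx) * (1 + μ i * Δx) ≤ 1 := by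
    intro i
    have h1 := Real.add_one_le_exp (μ i * Δx)
    have h2 : Real.exp (-(μ i) * Δx) * Real.exp (μ i * Δx) = 1 := by
      rw [← Real.exp_add, show -(μ i) * Δx + μ i * Δx = 0 by ring, Real.exp_zero]
    nlinarith [Real.exp_pos (-(μ i) * Δx)]
  -- the one-step decay of the weighted sums
  have decay : ∀ i, ∀ k, k ≤ K → ∀ n, n < N →
      (∑ j ∈ Finset.Icc 1 (M'+1), Real.exp (-(μ i) * ((j:ℝ) * Δx)) * (u i (n+1) j k)^2)
        ≤ (1 - (μ i * Δx) * Dmin i * Real.exp (-(μ i) * Δx) / 2) *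
          ∑ j ∈ Finset.Icc 1 (M'+1), Real.exp (-(μ i) * ((j:ℝ) * Δx)) * (u i n j k)^2 := by
    intro i k hk n hn
    have ihn := key n (by omega)
    have hvmem : ∀ j, j ≤ M'+1 → (fun l => u l n j k) ∈ Mδ :=
      fun j hj => hmem _ (fun l => ihn.1 l k hk j hj)
    -- δ-smallness specialised to i
    have hδ2 : δ ≤ Δx / (2*Δt) * (μ i * Dmin i * Real.exp (-T*Jstar) / Jstar) := by
      refine (hδsmall.trans (min_le_right _ _)).trans ?_
      exact mul_le_mul_of_nonneg_left
        (ciInf_le (Set.Finite.bddBelow (Set.finite_range _)) i) (by positivity)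
    have hee : Real.exp ((n:ℝ) * Δt * Jstar) ≤ Real.exp (T * Jstar) := by
      apply Real.exp_le_exp.2
      apply mul_le_mul_of_nonneg_right _ hJstarpos.le
      rw [hT]
      have hnn : (n:ℝ) ≤ N := by exact_mod_cast (by omega : n ≤ N)
      nlinarith
    have hη : Δt * (J i * (δ * Real.exp ((n:ℝ)*Δt*Jstar))) ≤ (μ i * Δx) * Dmin i / 2 := by
      have hXY : Real.exp (-T*Jstar) * Real.exp (T*Jstar) = 1 := by
        rw [← Real.exp_add, show -T*Jstar + T*Jstar = 0 by ring, Real.exp_zero]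
      have c1 : δ * Real.exp ((n:ℝ)*Δt*Jstar) ≤ δ * Real.exp (T*Jstar) :=
        mul_le_mul_of_nonneg_left hee hδpos.le
      have c2 : J i * (δ * Real.exp ((n:ℝ)*Δt*Jstar)) ≤ Jstar * (δ * Real.exp (T*Jstar)) :=
        mul_le_mul (hJle i) c1 (by positivity) hJstarpos.le
      have c3 : Jstar * (δ * Real.exp (T*Jstar))
          ≤ Jstar * ((Δx / (2*Δt) * (μ i * Dmin i * Real.exp (-T*Jstar) / Jstar)) *
              Real.exp (T*Jstar)) := by
        apply mul_le_mul_of_nonneg_left _ hJstarpos.le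
        exact mul_le_mul_of_nonneg_right hδ2 (Real.exp_pos _).le
      have c4 : Jstar * ((Δx / (2*Δt) * (μ i * Dmin i * Real.exp (-T*Jstar) / Jstar)) *
            Real.exp (T*Jstar)) = Δx / (2*Δt) * (μ i * Dmin i) *
              (Real.exp (-T*Jstar) * Real.exp (T*Jstar)) := by
        field_simp
      have c5 : J i * (δ * Real.exp ((n:ℝ)*Δt*Jstar)) ≤ Δx / (2*Δt) * (μ i * Dmin i) := by
        rw [c4, hXY, mul_one] at c3
        linarith [c2.trans c3]
      have c6 : Δt * (Δx / (2*Δt) * (μ i * Dmin i)) = (μ i * Δx) * Dmin i / 2 := by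
        field_simp
      calc Δt * (J i * (δ * Real.exp ((n:ℝ)*Δt*Jstar)))
          ≤ Δt * (Δx / (2*Δt) * (μ i * Dmin i)) := mul_le_mul_of_nonneg_left c5 hΔt.le
        _ = (μ i * Δx) * Dmin i / 2 := c6
    -- apply the abstract lemma
    apply aux_decay M' (μ i * Δx) (Real.exp (-(μ i) * Δx)) (Dmin i) (Dmax i)
      (κ i ^ 2) (Real.exp (-(μ i))) ((u i n (M'+1) k)^2)
      (fun j => Δt / Δx * Λ i (fun l => u l n j k))
      (fun j => Real.exp (-(μ i) * ((j:ℝ) * Δx)) * (u i n j k)^2)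
      (fun j => Real.exp (-(μ i) * ((j:ℝ) * Δx)) * (u i (n+1) j k)^2)
      (mul_pos (hμ i).1 hΔxpos) (Real.exp_pos _) (hq1 i) (hD i).1
      (fun j => mul_nonneg (Real.exp_pos _).le (sq_nonneg _))
      (fun j hj => (hlam _ (hvmem j hj) i).1)
      (fun j hj => (hlam _ (hvmem j hj) i).2)
      ?_ ?_ ?_ ?_ (sq_nonneg _) (sq_nonneg _) (Real.exp_pos _).le (hκD i)
    · -- pointwise convexity estimate
      intro j hj1 hjM
      have hsch := (hscheme n hn i k hk).1 j hj1 hjM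
      have h01 := hCFL _ (hvmem j hjM) i
      have heq : u i (n+1) j k = (1 - Δt / Δx * Λ i (fun l => u l n j k)) * u i n j k
          + Δt / Δx * Λ i (fun l => u l n j k) * u i n (j-1) k := by
        rw [hsch]; ring
      have hwq : Real.exp (-(μ i) * ((j:ℝ)*Δx))
          = Real.exp (-(μ i) * Δx) * Real.exp (-(μ i) * (((j-1:ℕ):ℝ)*Δx)) := by
        rw [← Real.exp_add]
        congr 1
        rw [Nat.cast_sub hj1]
        push_cast
        ring
      have hcv := aux_convex_sq (u i n j k) (u i n (j-1) k)
        (Δt / Δx * Λ i (fun l => u l n j k)) h01.1.le h01.2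
      calc Real.exp (-(μ i) * ((j:ℝ)*Δx)) * (u i (n+1) j k)^2
          = Real.exp (-(μ i) * ((j:ℝ)*Δx)) *
            ((1 - Δt / Δx * Λ i (fun l => u l n j k)) * u i n j k
              + Δt / Δx * Λ i (fun l => u l n j k) * u i n (j-1) k)^2 := by rw [heq]
        _ ≤ Real.exp (-(μ i) * ((j:ℝ)*Δx)) *
            ((1 - Δt / Δx * Λ i (fun l => u l n j k)) * (u i n j k)^2
              + Δt / Δx * Λ i (fun l => u l n j k) * (u i n (j-1) k)^2) :=
            mul_le_mul_of_nonneg_left hcv (Real.exp_pos _).le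
        _ = Real.exp (-(μ i) * ((j:ℝ)*Δx)) * (u i n j k)^2
            + Δt / Δx * Λ i (fun l => u l n j k) *
              (Real.exp (-(μ i) * Δx) * (Real.exp (-(μ i) * (((j-1:ℕ):ℝ)*Δx)) * (u i n (j-1) k)^2)
                - Real.exp (-(μ i) * ((j:ℝ)*Δx)) * (u i n j k)^2) := by
            rw [hwq]; ring
    · -- discrete Lipschitz bound on consecutive CFL numbers
      intro j hj1 hjM
      have hsup : (⨆ l, |u l n j k - u l n (j+1) k|) ≤ δ * Real.exp ((n:ℝ)*Δt*Jstar) * Δx := by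
        apply ciSup_le
        intro l
        rw [abs_sub_comm]
        have := ihn.2 l k hk (j+1) (by omega) (by omega)
        simpa using this
      have hlip := hLip _ (hvmem j (by omega)) _ (hvmem (j+1) (by omega)) i
      have h4 : Λ i (fun l => u l n (j+1) k) - Λ i (fun l => u l n j k)
          ≤ J i * (δ * Real.exp ((n:ℝ)*Δt*Jstar) * Δx) := by
        rw [abs_sub_comm] at hlip
        have := hlip.trans (mul_le_mul_of_nonneg_left hsup (hJ i).le)
        exact (le_abs_self _).trans this
      have h5 : Δt / Δx * Λ i (fun l => u l n (j+1) k) - Δt / Δx * Λ i (fun l => u l n j k)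
          ≤ Δt / Δx * (J i * (δ * Real.exp ((n:ℝ)*Δt*Jstar) * Δx)) := by
        rw [← mul_sub]
        exact mul_le_mul_of_nonneg_left h4 hr.le
      have h6 : Δt / Δx * (J i * (δ * Real.exp ((n:ℝ)*Δt*Jstar) * Δx))
          = Δt * (J i * (δ * Real.exp ((n:ℝ)*Δt*Jstar))) := by
        field_simp
      calc Δt / Δx * Λ i (fun l => u l n (j+1) k) - Δt / Δx * Λ i (fun l => u l n j k)
          ≤ Δt * (J i * (δ * Real.exp ((n:ℝ)*Δt*Jstar))) := by rw [← h6]; exact h5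
        _ ≤ (μ i * Δx) * Dmin i / 2 := hη
    · -- boundary value at j = 0
      have hbc := hBC n (by omega) i k hk
      have hw0 : Real.exp (-(μ i) * (((0:ℕ):ℝ)*Δx)) = 1 := by
        norm_num
      calc Real.exp (-(μ i) * (((0:ℕ):ℝ)*Δx)) * (u i n 0 k)^2
          = (κ i * u i n (M'+1) k)^2 := by rw [hw0, hbc]; ring
        _ = κ i ^ 2 * (u i n (M'+1) k)^2 := by ring
    · -- boundary value at j = M
      show Real.exp (-(μ i) * ((((M'+1):ℕ):ℝ)*Δx)) * (u i n (M'+1) k)^2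
          = Real.exp (-(μ i)) * (u i n (M'+1) k)^2
      rw [hMΔx, mul_one]
  -- decay rate versus ν
  have hνle : ∀ i, ν * Δt ≤ (μ i * Δx) * Dmin i * Real.exp (-(μ i) * Δx) / 2 := by
    intro i
    rw [hν]
    set I := ⨅ i, μ i * Dmin i * Real.exp (-(μ i) * Δx) with hI
    have h1 : (⨅ i, μ i * Dmin i * Real.exp (-(μ i) * Δx))
        ≤ μ i * Dmin i * Real.exp (-(μ i) * Δx) :=
      ciInf_le (Set.Finite.bddBelow (Set.finite_range _)) i
    have h2 : Δx / (2*Δt) * I * Δt = Δx / 2 * I := by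
      field_simp
    rw [h2]
    calc Δx / 2 * I
        ≤ Δx / 2 * (μ i * Dmin i * Real.exp (-(μ i) * Δx)) :=
          mul_le_mul_of_nonneg_left h1 (by positivity)
      _ = (μ i * Δx) * Dmin i * Real.exp (-(μ i) * Δx) / 2 := by ring
  -- one-step decay of L
  have hstepL : ∀ n, n < N → L (n+1) ≤ Real.exp (-(ν*Δt)) * L n := by
    intro n hn
    rw [hL (n+1), hL n]
    have hre : ∀ (n'' : ℕ) (i : Fin m), (∑ j ∈ Finset.Icc 1 (M'+1), ∑ k ∈ Finset.Icc 1 K,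
        Real.exp (-(μ i)*((j:ℝ)*Δx)) * (u i n'' j k)^2 * ρ k)
        = ∑ k ∈ Finset.Icc 1 K, (∑ j ∈ Finset.Icc 1 (M'+1),
            Real.exp (-(μ i)*((j:ℝ)*Δx)) * (u i n'' j k)^2) * ρ k := by
      intro n'' i
      rw [Finset.sum_comm]
      exact Finset.sum_congr rfl fun k _ => by rw [Finset.sum_mul]
    have hik : ∀ (i : Fin m) (k : ℕ), k ≤ K →
        (∑ j ∈ Finset.Icc 1 (M'+1), Real.exp (-(μ i)*((j:ℝ)*Δx)) * (u i (n+1) j k)^2)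
          ≤ Real.exp (-(ν*Δt)) *
            ∑ j ∈ Finset.Icc 1 (M'+1), Real.exp (-(μ i)*((j:ℝ)*Δx)) * (u i n j k)^2 := by
      intro i k hk
      have hd := decay i k hk n hn
      have hSnn : (0:ℝ) ≤ ∑ j ∈ Finset.Icc 1 (M'+1),
          Real.exp (-(μ i)*((j:ℝ)*Δx)) * (u i n j k)^2 :=
        Finset.sum_nonneg fun j _ => by positivity
      have hco : (1 - (μ i * Δx) * Dmin i * Real.exp (-(μ i) * Δx) / 2)
          ≤ Real.exp (-(ν*Δt)) := by
        have he := Real.add_one_le_exp (-(ν*Δt))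
        have := hνle i
        linarith
      exact hd.trans (mul_le_mul_of_nonneg_right hco hSnn)
    have main : (∑ i : Fin m, ∑ j ∈ Finset.Icc 1 (M'+1), ∑ k ∈ Finset.Icc 1 K,
          Real.exp (-(μ i)*((j:ℝ)*Δx)) * (u i (n+1) j k)^2 * ρ k)
        ≤ Real.exp (-(ν*Δt)) * ∑ i : Fin m, ∑ j ∈ Finset.Icc 1 (M'+1), ∑ k ∈ Finset.Icc 1 K,
            Real.exp (-(μ i)*((j:ℝ)*Δx)) * (u i n j k)^2 * ρ k := by
      rw [Finset.mul_sum]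
      refine Finset.sum_le_sum fun i _ => ?_
      rw [hre (n+1) i, hre n i, Finset.mul_sum]
      refine Finset.sum_le_sum fun k hkm => ?_
      rw [Finset.mem_Icc] at hkm
      have h7 := mul_le_mul_of_nonneg_right (hik i k hkm.2) (hρ k)
      calc (∑ j ∈ Finset.Icc 1 (M'+1), Real.exp (-(μ i)*((j:ℝ)*Δx)) * (u i (n+1) j k)^2) * ρ k
          ≤ (Real.exp (-(ν*Δt)) * ∑ j ∈ Finset.Icc 1 (M'+1),
              Real.exp (-(μ i)*((j:ℝ)*Δx)) * (u i n j k)^2) * ρ k := h7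
        _ = Real.exp (-(ν*Δt)) * ((∑ j ∈ Finset.Icc 1 (M'+1),
              Real.exp (-(μ i)*((j:ℝ)*Δx)) * (u i n j k)^2) * ρ k) := by ring
    calc Δx * Δξ * (∑ i : Fin m, ∑ j ∈ Finset.Icc 1 (M'+1), ∑ k ∈ Finset.Icc 1 K,
          Real.exp (-(μ i)*((j:ℝ)*Δx)) * (u i (n+1) j k)^2 * ρ k)
        ≤ Δx * Δξ * (Real.exp (-(ν*Δt)) * ∑ i : Fin m, ∑ j ∈ Finset.Icc 1 (M'+1),
            ∑ k ∈ Finset.Icc 1 K, Real.exp (-(μ i)*((j:ℝ)*Δx)) * (u i n j k)^2 * ρ k) :=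
          mul_le_mul_of_nonneg_left main (by positivity)
      _ = Real.exp (-(ν*Δt)) * (Δx * Δξ * ∑ i : Fin m, ∑ j ∈ Finset.Icc 1 (M'+1),
            ∑ k ∈ Finset.Icc 1 K, Real.exp (-(μ i)*((j:ℝ)*Δx)) * (u i n j k)^2 * ρ k) := by ring
  -- conclude by induction on n
  intro n
  induction n with
  | zero =>
    intro _
    norm_num
  | succ p ih =>
    intro hn
    have hp := ih (by omega)
    have hs := hstepL p (by omega)
    have hepos : (0:ℝ) ≤ Real.exp (-(ν*Δt)) := (Real.exp_pos _).le
    calc L (p+1) ≤ Real.exp (-(ν*Δt)) * L p := hs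
      _ ≤ Real.exp (-(ν*Δt)) * (Real.exp (-ν * ((p:ℝ)*Δt)) * L 0) :=
          mul_le_mul_of_nonneg_left hp hepos
      _ = Real.exp (-ν * ((((p+1):ℕ):ℝ)*Δt)) * L 0 := by
          rw [← mul_assoc, ← Real.exp_add]
          congr 2
          push_cast
          ring
end

section
/- One-step Lyapunov estimate in the linear case: let Λ_i > 0 be constants with D_i := (Δt/Δx)·Λ_i ≤ 1, let 0 < κ_i < 1 and 0 < μ_i ≤ ln(κ_i^{−2}) for every i = 1,…,m, and let ρ_k ≥ 0. Then for every time level n < N the values produced by the linear upwind scheme satisfy (L^{n+1} − L^n)/Δt ≤ −(Δx/Δt)·min_i {μ_i·D_i·e^{−μ_i·Δx}}·L^n. -/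
lemma key_lemma (M : ℕ) (hM : 2 ≤ M) (Δx D μc κc : ℝ)
    (hΔx : 0 < Δx) (hMΔx : (M : ℝ) * Δx = 1)
    (hD0 : 0 ≤ D) (hD1 : D ≤ 1) (hμ : 0 < μc) (hκ2 : κc ^ 2 ≤ Real.exp (-μc))
    (v w : ℕ → ℝ)
    (hs : ∀ j, 1 ≤ j → j ≤ M → w j = v j - D * (v j - v (j - 1)))
    (hb : v 0 = κc * v M) :
    ∑ j ∈ Finset.Icc 1 M, Real.exp (-μc * ((j : ℝ) * Δx)) * (w j) ^ 2 ≤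
      (1 - Δx * (μc * D * Real.exp (-μc * Δx))) *
        ∑ j ∈ Finset.Icc 1 M, Real.exp (-μc * ((j : ℝ) * Δx)) * (v j) ^ 2 := by
  set E : ℕ → ℝ := fun j => Real.exp (-μc * ((j : ℝ) * Δx)) with hE
  have hEpos : ∀ j, 0 < E j := fun j => Real.exp_pos _
  set S : ℝ := ∑ j ∈ Finset.Icc 1 M, E j * (v j) ^ 2 with hSdef
  have hS0 : 0 ≤ S :=
    Finset.sum_nonneg fun j _ => mul_nonneg (hEpos j).le (sq_nonneg _)
  -- step 1: convexity
  have step1 : ∑ j ∈ Finset.Icc 1 M, E j * (w j) ^ 2 ≤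
      ∑ j ∈ Finset.Icc 1 M, E j * ((1 - D) * (v j) ^ 2 + D * (v (j - 1)) ^ 2) := by
    apply Finset.sum_le_sum
    intro j hj
    rw [Finset.mem_Icc] at hj
    rw [hs j hj.1 hj.2]
    have hconv : (v j - D * (v j - v (j - 1))) ^ 2 ≤
        (1 - D) * (v j) ^ 2 + D * (v (j - 1)) ^ 2 := by
      nlinarith [mul_nonneg (mul_nonneg hD0 (sub_nonneg.2 hD1)) (sq_nonneg (v j - v (j - 1)))]
    exact mul_le_mul_of_nonneg_left hconv (hEpos j).le
  have step2 : ∑ j ∈ Finset.Icc 1 M, E j * ((1 - D) * (v j) ^ 2 + D * (v (j - 1)) ^ 2)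
      = (1 - D) * S + D * ∑ j ∈ Finset.Icc 1 M, E j * (v (j - 1)) ^ 2 := by
    rw [hSdef, Finset.mul_sum, Finset.mul_sum, ← Finset.sum_add_distrib]
    exact Finset.sum_congr rfl fun j _ => by ring
  -- reindex the shifted sum
  have step3 : ∑ j ∈ Finset.Icc 1 M, E j * (v (j - 1)) ^ 2
      = Real.exp (-μc * Δx) * ∑ j ∈ Finset.range M, E j * (v j) ^ 2 := by
    rw [← Finset.Ico_add_one_right_eq_Icc, Finset.sum_Ico_eq_sum_range, Finset.mul_sum]
    simp only [Nat.add_sub_cancel_left, add_tsub_cancel_left, Nat.add_sub_cancel]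
    apply Finset.sum_congr (by norm_num)
    intro j _
    have : E (1 + j) = Real.exp (-μc * Δx) * E j := by
      rw [hE]
      simp only
      rw [← Real.exp_add]
      congr 1
      push_cast
      ring
    rw [this]; ring
  have hMpos : 0 < M := by omega
  have step5 : ∑ j ∈ Finset.range M, E j * (v j) ^ 2 ≤ S := by
    rw [Finset.range_eq_Ico, Finset.sum_eq_sum_Ico_succ_bot hMpos]
    have hS' : S = (∑ j ∈ Finset.Ico 1 M, E j * (v j) ^ 2) + E M * (v M) ^ 2 := by
      rw [hSdef, ← Finset.Ico_add_one_right_eq_Icc, Finset.sum_Ico_succ_top (by omega)]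
    rw [hS']
    have hE0 : E 0 = 1 := by simp [hE]
    have hEM : E M = Real.exp (-μc) := by
      rw [hE]; simp only; congr 1
      rw [hMΔx]; ring
    have hv0 : E 0 * (v 0) ^ 2 ≤ E M * (v M) ^ 2 := by
      rw [hE0, hEM, hb, one_mul, mul_pow]
      exact mul_le_mul_of_nonneg_right hκ2 (sq_nonneg _)
    linarith
  -- scalar inequality
  have hscalar : Δx * (μc * D * Real.exp (-μc * Δx)) ≤ D * (1 - Real.exp (-μc * Δx)) := by
    have ht : 0 < μc * Δx := mul_pos hμ hΔx
    have h1 : (μc * Δx + 1) * Real.exp (-(μc * Δx)) ≤ Real.exp (μc * Δx) * Real.exp (-(μc * Δx)) :=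
      mul_le_mul_of_nonneg_right (Real.add_one_le_exp (μc * Δx)) (Real.exp_pos _).le
    have h2 : Real.exp (μc * Δx) * Real.exp (-(μc * Δx)) = 1 := by
      rw [← Real.exp_add]; simp
    have h3 : μc * Δx * Real.exp (-(μc * Δx)) ≤ 1 - Real.exp (-(μc * Δx)) := by nlinarith
    have h4 : -μc * Δx = -(μc * Δx) := by ring
    rw [h4]
    nlinarith [mul_le_mul_of_nonneg_left h3 hD0]
  have hDE : 0 ≤ D * Real.exp (-μc * Δx) := mul_nonneg hD0 (Real.exp_pos _).le
  calc ∑ j ∈ Finset.Icc 1 M, E j * (w j) ^ 2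
      ≤ (1 - D) * S + D * (Real.exp (-μc * Δx) * ∑ j ∈ Finset.range M, E j * (v j) ^ 2) := by
        rw [← step3, ← step2]; exact step1
    _ ≤ (1 - D) * S + D * (Real.exp (-μc * Δx) * S) := by
        have := mul_le_mul_of_nonneg_left step5 (Real.exp_pos (-μc * Δx)).le
        nlinarith [mul_le_mul_of_nonneg_left this hD0]
    _ ≤ (1 - Δx * (μc * D * Real.exp (-μc * Δx))) * S := by nlinarith [mul_le_mul_of_nonneg_right hscalar hS0]

/-- One-step Lyapunov estimate in the linear case: with constant
speeds `Λ_i > 0`, Courant numbers `D_i = (Δt/Δx)·Λ_i ≤ 1`, gains `0 < κ_i < 1`,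
weights `0 < μ_i ≤ ln(κ_i^{−2})`, and nonnegative `ρ_k`, the linear upwind scheme
satisfies `(L^{n+1} − L^n)/Δt ≤ −(Δx/Δt)·min_i{μ_i·D_i·e^{−μ_i·Δx}}·L^n` for every
time level `n < N`. -/
theorem one_step_lyapunov_estimate_linear
    (m M K N : ℕ) (hm : 1 ≤ m) (hM : 2 ≤ M) (hK : 1 ≤ K)
    (Δx Δt Δξ : ℝ) (hΔx : Δx = 1 / M) (hΔt : 0 < Δt) (hΔξ : 0 < Δξ)
    (Λ κ μ : Fin m → ℝ) (ρ : ℕ → ℝ) (hρ : ∀ k, 0 ≤ ρ k)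
    (u : Fin m → ℕ → ℕ → ℕ → ℝ)
    (hΛ : ∀ i, 0 < Λ i)
    (hD : ∀ i, Δt / Δx * Λ i ≤ 1)
    (hκ : ∀ i, 0 < κ i ∧ κ i < 1)
    (hμ : ∀ i, 0 < μ i ∧ μ i ≤ Real.log (1 / κ i ^ 2))
    -- the linear upwind scheme, with the feedback boundary condition at every level
    (hscheme : ∀ n, n < N → ∀ i, ∀ k, k ≤ K → ∀ j, 1 ≤ j → j ≤ M →
      u i (n+1) j k = u i n j k - Δt / Δx * Λ i * (u i n j k - u i n (j-1) k))
    (hbc : ∀ n, n ≤ N → ∀ i, ∀ k, k ≤ K → u i n 0 k = κ i * u i n M k)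
    (L : ℕ → ℝ)
    (hL : ∀ n, L n = Δx * Δξ * ∑ i : Fin m, ∑ j ∈ Finset.Icc 1 M, ∑ k ∈ Finset.Icc 1 K,
      Real.exp (-(μ i) * ((j : ℝ) * Δx)) * (u i n j k) ^ 2 * ρ k) :
    ∀ n, n < N →
      (L (n+1) - L n) / Δt ≤
        -(Δx / Δt) * (⨅ i, μ i * (Δt / Δx * Λ i) * Real.exp (-(μ i) * Δx)) * L n := by
  intro n hn
  haveI : Nonempty (Fin m) := ⟨⟨0, by omega⟩⟩
  have hMR : (0 : ℝ) < M := by exact_mod_cast (by omega : 0 < M)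
  have hΔxpos : 0 < Δx := by rw [hΔx]; positivity
  have hMΔx : (M : ℝ) * Δx = 1 := by rw [hΔx]; field_simp
  set c : ℝ := ⨅ i, μ i * (Δt / Δx * Λ i) * Real.exp (-(μ i) * Δx) with hc
  have hc_le : ∀ i, c ≤ μ i * (Δt / Δx * Λ i) * Real.exp (-(μ i) * Δx) := fun i =>
    ciInf_le (Set.Finite.bddBelow (Set.finite_range _)) i
  -- per-component estimate
  have hTkey : ∀ i : Fin m,
      (∑ j ∈ Finset.Icc 1 M, ∑ k ∈ Finset.Icc 1 K,
        Real.exp (-(μ i) * ((j : ℝ) * Δx)) * (u i (n+1) j k) ^ 2 * ρ k) ≤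
      (1 - Δx * (μ i * (Δt / Δx * Λ i) * Real.exp (-(μ i) * Δx))) *
      (∑ j ∈ Finset.Icc 1 M, ∑ k ∈ Finset.Icc 1 K,
        Real.exp (-(μ i) * ((j : ℝ) * Δx)) * (u i n j k) ^ 2 * ρ k) := by
    intro i
    have hD0 : 0 ≤ Δt / Δx * Λ i :=
      mul_nonneg (div_nonneg hΔt.le hΔxpos.le) (hΛ i).le
    have hκ2 : κ i ^ 2 ≤ Real.exp (-(μ i)) := by
      have hκ2pos : (0 : ℝ) < 1 / κ i ^ 2 := one_div_pos.mpr (pow_pos (hκ i).1 2)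
      have h1 : Real.exp (μ i) ≤ 1 / κ i ^ 2 :=
        (Real.exp_le_exp.2 (hμ i).2).trans_eq (Real.exp_log hκ2pos)
      have h2 : κ i ^ 2 * Real.exp (μ i) ≤ 1 := by
        have := mul_le_mul_of_nonneg_left h1 (sq_nonneg (κ i))
        have hne : κ i ^ 2 ≠ 0 := ne_of_gt (pow_pos (hκ i).1 2)
        calc κ i ^ 2 * Real.exp (μ i) ≤ κ i ^ 2 * (1 / κ i ^ 2) := this
          _ = 1 := by rw [mul_one_div_cancel hne]
      have hEE : Real.exp (-(μ i)) * Real.exp (μ i) = 1 := by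
        rw [← Real.exp_add]; simp
      nlinarith [Real.exp_pos (μ i)]
    rw [Finset.sum_comm, Finset.sum_comm
      (s := Finset.Icc 1 M) (t := Finset.Icc 1 K)
      (f := fun j k => Real.exp (-(μ i) * ((j : ℝ) * Δx)) * (u i n j k) ^ 2 * ρ k),
      Finset.mul_sum]
    apply Finset.sum_le_sum
    intro k hk
    rw [Finset.mem_Icc] at hk
    have key := key_lemma M hM Δx (Δt / Δx * Λ i) (μ i) (κ i) hΔxpos hMΔx hD0 (hD i)
      (hμ i).1 hκ2 (fun j => u i n j k) (fun j => u i (n+1) j k)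
      (fun j hj1 hj2 => hscheme n hn i k hk.2 j hj1 hj2)
      (hbc n hn.le i k hk.2)
    have hrw1 : ∀ nn : ℕ, ∑ j ∈ Finset.Icc 1 M,
        Real.exp (-(μ i) * ((j : ℝ) * Δx)) * (u i nn j k) ^ 2 * ρ k
        = (∑ j ∈ Finset.Icc 1 M,
            Real.exp (-(μ i) * ((j : ℝ) * Δx)) * (u i nn j k) ^ 2) * ρ k := by
      intro nn; rw [Finset.sum_mul]
    rw [hrw1, hrw1, ← mul_assoc]
    exact mul_le_mul_of_nonneg_right (by simpa using key) (hρ k)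
  -- nonnegativity of each component
  have hT0 : ∀ i : Fin m, 0 ≤ ∑ j ∈ Finset.Icc 1 M, ∑ k ∈ Finset.Icc 1 K,
      Real.exp (-(μ i) * ((j : ℝ) * Δx)) * (u i n j k) ^ 2 * ρ k := by
    intro i
    refine Finset.sum_nonneg fun j _ => Finset.sum_nonneg fun k _ => ?_
    exact mul_nonneg (mul_nonneg (Real.exp_pos _).le (sq_nonneg _)) (hρ k)
  have hsum : ∑ i : Fin m, ∑ j ∈ Finset.Icc 1 M, ∑ k ∈ Finset.Icc 1 K,
      Real.exp (-(μ i) * ((j : ℝ) * Δx)) * (u i (n+1) j k) ^ 2 * ρ k ≤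
      (1 - Δx * c) * ∑ i : Fin m, ∑ j ∈ Finset.Icc 1 M, ∑ k ∈ Finset.Icc 1 K,
      Real.exp (-(μ i) * ((j : ℝ) * Δx)) * (u i n j k) ^ 2 * ρ k := by
    rw [Finset.mul_sum]
    apply Finset.sum_le_sum
    intro i _
    calc _ ≤ (1 - Δx * (μ i * (Δt / Δx * Λ i) * Real.exp (-(μ i) * Δx))) *
          (∑ j ∈ Finset.Icc 1 M, ∑ k ∈ Finset.Icc 1 K,
            Real.exp (-(μ i) * ((j : ℝ) * Δx)) * (u i n j k) ^ 2 * ρ k) := hTkey i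
      _ ≤ (1 - Δx * c) *
          (∑ j ∈ Finset.Icc 1 M, ∑ k ∈ Finset.Icc 1 K,
            Real.exp (-(μ i) * ((j : ℝ) * Δx)) * (u i n j k) ^ 2 * ρ k) := by
          apply mul_le_mul_of_nonneg_right _ (hT0 i)
          nlinarith [hc_le i]
  have hfinal : L (n+1) ≤ (1 - Δx * c) * L n := by
    rw [hL (n+1), hL n]
    calc Δx * Δξ * ∑ i : Fin m, ∑ j ∈ Finset.Icc 1 M, ∑ k ∈ Finset.Icc 1 K,
          Real.exp (-(μ i) * ((j : ℝ) * Δx)) * (u i (n+1) j k) ^ 2 * ρ k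
        ≤ Δx * Δξ * ((1 - Δx * c) * ∑ i : Fin m, ∑ j ∈ Finset.Icc 1 M, ∑ k ∈ Finset.Icc 1 K,
          Real.exp (-(μ i) * ((j : ℝ) * Δx)) * (u i n j k) ^ 2 * ρ k) :=
          mul_le_mul_of_nonneg_left hsum (by positivity)
      _ = (1 - Δx * c) * (Δx * Δξ * ∑ i : Fin m, ∑ j ∈ Finset.Icc 1 M, ∑ k ∈ Finset.Icc 1 K,
          Real.exp (-(μ i) * ((j : ℝ) * Δx)) * (u i n j k) ^ 2 * ρ k) := by ring
  rw [div_le_iff₀ hΔt]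
  have hrw : -(Δx / Δt) * c * L n * Δt = -(Δx * c * L n) := by
    field_simp
  rw [hrw]
  have hexp : (1 - Δx * c) * L n = L n - Δx * c * L n := by ring
  linarith [hfinal]
end

section
/- Nonpositivity of the boundary remainder with cross feedback: let Δx > 0 and set x_0 = 0, x_1 = Δx, x_M = 1, x_{M+1} = 1 + Δx. Let 0 < D^min_1 ≤ D^max_1 and 0 < D^min_2 ≤ D^max_2, let κ_1, κ_2 > 0 satisfy κ_2 < √(D^min_2/D^max_1) and κ_1 < √(D^min_1/D^max_2), and let μ satisfy 0 < μ ≤ (1/(2 + Δx))·ln(D^min_1/(D^max_2·κ_1²)). Then for all real numbers a and b, a²·(D^max_1·κ_2²·e^{−μ·x_1} − D^min_2·e^{μ·x_0}) + b²·(D^max_2·κ_1²·e^{μ·x_M} − D^min_1·e^{−μ·x_{M+1}}) ≤ 0. -/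
open Real

lemma mul_sq_lt_of_lt_sqrt_div {κ D M : ℝ} (hκ : 0 ≤ κ) (hM : 0 < M) (h : κ < √(D / M)) :
    M * κ ^ 2 < D := by
  rw [← lt_div_iff₀' hM]
  exact (lt_sqrt hκ).mp h

lemma mul_exp_le_mul_exp_of_sub_le_log {c d x y : ℝ} (hc : 0 < c) (hd : 0 < d)
    (h : x - y ≤ log (d / c)) : c * exp x ≤ d * exp y := by
  have hexp : exp (x - y) ≤ d / c := (exp_le_exp.mpr h).trans_eq (exp_log (by positivity))
  calc c * exp x = c * exp (x - y) * exp y := by rw [mul_assoc, ← exp_add, sub_add_cancel]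
    _ ≤ d * exp y := by gcongr; exact (le_div_iff₀' hc).mp hexp

theorem boundary_remainder_nonpositive_cross_feedback_general
    (Δx Dmin1 Dmax1 Dmin2 Dmax2 κ1 κ2 μ : ℝ)
    (hΔx : 0 < Δx)
    (h1 : 0 < Dmin1) (h1' : Dmin1 ≤ Dmax1)
    (h2 : 0 < Dmin2) (h2' : Dmin2 ≤ Dmax2)
    (hκ1 : 0 < κ1) (hκ2 : 0 < κ2)
    (hκ2b : κ2 < Real.sqrt (Dmin2 / Dmax1))
    (hμ : 0 < μ) (hμb : μ ≤ 1 / (2 + Δx) * Real.log (Dmin1 / (Dmax2 * κ1 ^ 2)))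
    (a b : ℝ) :
    a ^ 2 * (Dmax1 * κ2 ^ 2 * Real.exp (-μ * Δx) - Dmin2 * Real.exp (μ * 0)) +
      b ^ 2 * (Dmax2 * κ1 ^ 2 * Real.exp (μ * 1) - Dmin1 * Real.exp (-μ * (1 + Δx))) ≤ 0 := by
  have hDmax1 : 0 < Dmax1 := h1.trans_le h1'
  have hDmax2 : 0 < Dmax2 := h2.trans_le h2'
  have left_nonpos :
      Dmax1 * κ2 ^ 2 * exp (-μ * Δx) - Dmin2 * exp (μ * 0) ≤ 0 := by
    rw [sub_nonpos]
    gcongr ?_ * exp ?_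
    · exact (mul_sq_lt_of_lt_sqrt_div hκ2.le hDmax1 hκ2b).le
    · nlinarith
  have right_nonpos :
      Dmax2 * κ1 ^ 2 * exp (μ * 1) - Dmin1 * exp (-μ * (1 + Δx)) ≤ 0 := by
    rw [sub_nonpos]
    refine mul_exp_le_mul_exp_of_sub_le_log (by positivity) h1 ?_
    rw [one_div_mul_eq_div, le_div_iff₀ (by positivity)] at hμb
    linarith
  exact add_nonpos (mul_nonpos_of_nonneg_of_nonpos (sq_nonneg a) left_nonpos)
    (mul_nonpos_of_nonneg_of_nonpos (sq_nonneg b) right_nonpos)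

/-- Nonpositivity of the boundary remainder with cross feedback, with
`x_0 = 0`, `x_1 = Δx`, `x_M = 1`, `x_{M+1} = 1 + Δx`. -/
theorem boundary_remainder_nonpositive_cross_feedback
    (Δx Dmin1 Dmax1 Dmin2 Dmax2 κ1 κ2 μ : ℝ)
    (hΔx : 0 < Δx)
    (h1 : 0 < Dmin1) (h1' : Dmin1 ≤ Dmax1)
    (h2 : 0 < Dmin2) (h2' : Dmin2 ≤ Dmax2)
    (hκ1 : 0 < κ1) (hκ2 : 0 < κ2)
    (hκ2b : κ2 < Real.sqrt (Dmin2 / Dmax1))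
    (hκ1b : κ1 < Real.sqrt (Dmin1 / Dmax2))
    (hμ : 0 < μ) (hμb : μ ≤ 1 / (2 + Δx) * Real.log (Dmin1 / (Dmax2 * κ1 ^ 2)))
    (a b : ℝ) :
    a ^ 2 * (Dmax1 * κ2 ^ 2 * Real.exp (-μ * Δx) - Dmin2 * Real.exp (μ * 0)) +
      b ^ 2 * (Dmax2 * κ1 ^ 2 * Real.exp (μ * 1) - Dmin1 * Real.exp (-μ * (1 + Δx))) ≤ 0 :=
  boundary_remainder_nonpositive_cross_feedback_general Δx Dmin1 Dmax1 Dmin2 Dmax2 κ1 κ2 μ hΔx h1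
    h1' h2 h2' hκ1 hκ2 hκ2b hμ hμb a b
end

section
/- Weighted summation-by-parts inequality for the downwind update (inequality (1.40b)): let M ≥ 2, Δx = 1/M, x_j = j·Δx, μ > 0 and κ ∈ ℝ. Let u_1,…,u_{M+1} and D_1,…,D_{M+1} be real numbers with 0 ≤ D_j ≤ 1 for all j, u_{M+1} = κ·u_1, and D_{M+1} = D_M. Define v_j := (1 − D_{j+1})·u_j + D_{j+1}·u_{j+1} for j = 1,…,M. Then Σ_{j=1}^M (v_j² − u_j²)·e^{μ·x_j} ≤ Σ_{j=1}^M u_j²·(D_j·e^{−μ·Δx} − D_{j+1})·e^{μ·x_j} + u_1²·(D_M·κ²·e^{μ·x_M} − D_1·e^{μ·x_0}). -/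
/-- Weighted summation-by-parts inequality for the downwind update
(inequality (1.40b) of the paper), with `x_j = j·Δx`, `Δx = 1/M`, `x_0 = 0`,
`x_M = 1`. -/
theorem weighted_summation_by_parts_downwind
    (M : ℕ) (hM : 2 ≤ M)
    (Δx μ κ : ℝ) (hΔx : Δx = 1 / M) (hμ : 0 < μ)
    (u D v : ℕ → ℝ)
    (hD : ∀ j, 1 ≤ j → j ≤ M + 1 → 0 ≤ D j ∧ D j ≤ 1)
    (hu : u (M+1) = κ * u 1)
    (hDM : D (M+1) = D M)
    (hv : ∀ j, 1 ≤ j → j ≤ M → v j = (1 - D (j+1)) * u j + D (j+1) * u (j+1)) :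
    ∑ j ∈ Finset.Icc 1 M, ((v j) ^ 2 - (u j) ^ 2) * Real.exp (μ * ((j : ℝ) * Δx)) ≤
      ∑ j ∈ Finset.Icc 1 M,
        (u j) ^ 2 * (D j * Real.exp (-μ * Δx) - D (j+1)) * Real.exp (μ * ((j : ℝ) * Δx)) +
      (u 1) ^ 2 * (D M * κ ^ 2 * Real.exp (μ * ((M : ℝ) * Δx)) -
        D 1 * Real.exp (μ * ((0 : ℝ) * Δx))) := by
  set S : ℕ → ℝ := fun j => D j * u j ^ 2 * Real.exp (μ * (((j : ℝ) - 1) * Δx)) with hS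
  have key : ∀ j ∈ Finset.Icc 1 M,
      (v j ^ 2 - u j ^ 2) * Real.exp (μ * ((j : ℝ) * Δx)) ≤
      (u j ^ 2 * (D j * Real.exp (-μ * Δx) - D (j+1)) * Real.exp (μ * ((j : ℝ) * Δx)))
        + (S (j+1) - S j) := by
    intro j hj
    simp only [Finset.mem_Icc] at hj
    obtain ⟨hj1, hjM⟩ := hj
    have hvj := hv j hj1 hjM
    obtain ⟨hD0, hD1⟩ := hD (j+1) (by omega) (by omega)
    have hexp : 0 < Real.exp (μ * ((j : ℝ) * Δx)) := Real.exp_pos _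
    have hconv : v j ^ 2 - u j ^ 2 ≤ D (j+1) * (u (j+1) ^ 2 - u j ^ 2) := by
      rw [hvj]
      nlinarith [mul_nonneg (mul_nonneg hD0 (sub_nonneg.2 hD1))
        (sq_nonneg (u (j+1) - u j))]
    have hle : (v j ^ 2 - u j ^ 2) * Real.exp (μ * ((j : ℝ) * Δx)) ≤
        D (j+1) * (u (j+1) ^ 2 - u j ^ 2) * Real.exp (μ * ((j : ℝ) * Δx)) :=
      mul_le_mul_of_nonneg_right hconv hexp.le
    refine hle.trans_eq ?_
    simp only [hS]
    have e2 : Real.exp (μ * ((((j+1 : ℕ) : ℝ) - 1) * Δx)) =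
        Real.exp (μ * ((j : ℝ) * Δx)) := by push_cast; ring_nf
    have e1 : Real.exp (μ * (((j : ℝ) - 1) * Δx)) =
        Real.exp (-μ * Δx) * Real.exp (μ * ((j : ℝ) * Δx)) := by
      rw [← Real.exp_add]; ring_nf
    rw [e2, e1]; ring
  have hsum := Finset.sum_le_sum key
  rw [Finset.sum_add_distrib] at hsum
  have htel : ∀ N : ℕ, ∑ j ∈ Finset.Icc 1 N, (S (j+1) - S j) = S (N+1) - S 1 := by
    intro N
    induction N with
    | zero => simp
    | succ n ih => rw [Finset.sum_Icc_succ_top (by omega), ih]; ring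
  rw [htel M] at hsum
  refine hsum.trans_eq ?_
  congr 1
  simp only [hS]
  have c1 : (((M+1 : ℕ) : ℝ) - 1) = (M : ℝ) := by push_cast; ring
  have c2 : (((1 : ℕ) : ℝ) - 1) * Δx = μ * ((0 : ℝ) * Δx) / μ := by push_cast; field_simp; ring
  rw [c1, hu, hDM]
  have c3 : Real.exp (μ * ((((1 : ℕ) : ℝ) - 1) * Δx)) = Real.exp (μ * ((0 : ℝ) * Δx)) := by
    norm_num
  rw [c3]; ring
end

section
/- Weighted summation-by-parts inequality for the upwind update (derivation of (1.23)): let M ≥ 2, Δx = 1/M, x_j = j·Δx, μ > 0 and κ ∈ ℝ. Let u_0,…,u_M and D_1,…,D_M be real numbers with 0 ≤ D_j ≤ 1 for all j, u_0 = κ·u_M, and set D_{M+1} := D_M. Define v_j := (1 − D_j)·u_j + D_j·u_{j−1} for j = 1,…,M. Then Σ_{j=1}^M (v_j² − u_j²)·e^{−μ·x_j} ≤ Σ_{j=1}^M u_j²·(D_{j+1}·e^{−μ·Δx} − D_j)·e^{−μ·x_j} + (D_1·κ²·e^{−μ·x_1} − D_{M+1}·e^{−μ·(x_M+Δx)})·u_M².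 -/
/-!
The upwind value `v_j` is a convex combination of `u_j` and `u_{j-1}`, so convexity of the
square gives `v_j² - u_j² ≤ D_j (u_{j-1}² - u_j²)`. Multiplying by the weights
`w_j = e^{-μ x_j}` and shifting the index of the `u_{j-1}²` terms (Abel summation) moves
everything onto `u_1², …, u_M²`, leaving the boundary terms `D_1 w_1 u_0²` and
`-D_{M+1} w_{M+1} u_M²`; the inflow condition `u_0 = κ u_M` turns the first into a
multiple of `u_M²`, and `w_{j+1} = e^{-μ Δx} w_j` gives the stated form.
-/

open Finset

theorem sq_convex_combination_le {d : ℝ} (hd₀ : 0 ≤ d) (hd₁ : d ≤ 1) (a b : ℝ) :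
    ((1 - d) * a + d * b) ^ 2 ≤ (1 - d) * a ^ 2 + d * b ^ 2 := by
  linear_combination mul_nonneg (mul_nonneg hd₀ (sub_nonneg.2 hd₁)) (sq_nonneg (a - b))

theorem Finset.sum_Icc_one_comp_sub_one {G : Type*} [AddCommGroup G] (f : ℕ → G) (M : ℕ) :
    ∑ j ∈ Icc 1 M, f (j - 1) = f 0 + ∑ j ∈ Icc 1 M, f j - f M := by
  induction M with
  | zero => simp
  | succ M ih =>
    rw [sum_Icc_succ_top (by omega), sum_Icc_succ_top (by omega), ih, Nat.add_sub_cancel]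
    abel

theorem sum_mul_sq_pred_sub_sq_mul_eq {R : Type*} [CommRing R] (M : ℕ) (u D w : ℕ → R) :
    ∑ j ∈ Icc 1 M, D j * (u (j - 1) ^ 2 - u j ^ 2) * w j =
      ∑ j ∈ Icc 1 M, u j ^ 2 * (D (j + 1) * w (j + 1) - D j * w j) +
        D 1 * u 0 ^ 2 * w 1 - D (M + 1) * u M ^ 2 * w (M + 1) := by
  set f : ℕ → R := fun i => D (i + 1) * u i ^ 2 * w (i + 1)
  have hshift : ∑ j ∈ Icc 1 M, D j * u (j - 1) ^ 2 * w j = ∑ j ∈ Icc 1 M, f (j - 1) := by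
    refine sum_congr rfl fun j hj => ?_
    simp only [f, Nat.sub_add_cancel (mem_Icc.1 hj).1]
  have hsplit : ∑ j ∈ Icc 1 M, u j ^ 2 * (D (j + 1) * w (j + 1) - D j * w j) =
      ∑ j ∈ Icc 1 M, f j - ∑ j ∈ Icc 1 M, D j * u j ^ 2 * w j := by
    rw [← sum_sub_distrib]
    exact sum_congr rfl fun j _ => by simp only [f]; ring
  have hexpand : ∑ j ∈ Icc 1 M, D j * (u (j - 1) ^ 2 - u j ^ 2) * w j =
      ∑ j ∈ Icc 1 M, D j * u (j - 1) ^ 2 * w j - ∑ j ∈ Icc 1 M, D j * u j ^ 2 * w j := by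
    rw [← sum_sub_distrib]
    exact sum_congr rfl fun j _ => by ring
  rw [hexpand, hsplit, hshift, sum_Icc_one_comp_sub_one]
  simp only [f, Nat.zero_add]
  ring

theorem sum_upwind_sq_sub_sq_mul_le (M : ℕ) (u D v w : ℕ → ℝ) (hw : ∀ j, 0 ≤ w j)
    (hD : ∀ j, 1 ≤ j → j ≤ M → 0 ≤ D j ∧ D j ≤ 1)
    (hv : ∀ j, 1 ≤ j → j ≤ M → v j = (1 - D j) * u j + D j * u (j - 1)) :
    ∑ j ∈ Icc 1 M, (v j ^ 2 - u j ^ 2) * w j ≤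
      ∑ j ∈ Icc 1 M, D j * (u (j - 1) ^ 2 - u j ^ 2) * w j := by
  refine sum_le_sum fun j hj => mul_le_mul_of_nonneg_right ?_ (hw j)
  obtain ⟨hj₁, hjM⟩ := mem_Icc.1 hj
  obtain ⟨hD₀, hD₁⟩ := hD j hj₁ hjM
  rw [hv j hj₁ hjM]
  linarith [sq_convex_combination_le hD₀ hD₁ (u j) (u (j - 1))]

theorem weighted_summation_by_parts_upwind_general
    (M : ℕ)
    (Δx μ κ : ℝ)
    (u D v : ℕ → ℝ)
    (hD : ∀ j, 1 ≤ j → j ≤ M → 0 ≤ D j ∧ D j ≤ 1)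
    (hu : u 0 = κ * u M)
    (hv : ∀ j, 1 ≤ j → j ≤ M → v j = (1 - D j) * u j + D j * u (j-1)) :
    ∑ j ∈ Finset.Icc 1 M, ((v j) ^ 2 - (u j) ^ 2) * Real.exp (-μ * ((j : ℝ) * Δx)) ≤
      ∑ j ∈ Finset.Icc 1 M,
        (u j) ^ 2 * (D (j+1) * Real.exp (-μ * Δx) - D j) * Real.exp (-μ * ((j : ℝ) * Δx)) +
      (D 1 * κ ^ 2 * Real.exp (-μ * ((1 : ℝ) * Δx)) -
        D (M+1) * Real.exp (-μ * ((M : ℝ) * Δx + Δx))) * (u M) ^ 2 := by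
  set w : ℕ → ℝ := fun j => Real.exp (-μ * ((j : ℝ) * Δx)) with hw
  have hw_succ (j : ℕ) : w (j + 1) = Real.exp (-μ * Δx) * w j := by
    simp only [hw, Nat.cast_add, Nat.cast_one, ← Real.exp_add]
    ring_nf
  have hw_last : Real.exp (-μ * ((M : ℝ) * Δx + Δx)) = w (M + 1) := by
    simp only [hw, Nat.cast_add, Nat.cast_one]
    ring_nf
  refine (sum_upwind_sq_sub_sq_mul_le M u D v w (fun j => (Real.exp_pos _).le) hD hv).trans
    (le_of_eq ?_)
  have hw_one : Real.exp (-μ * ((1 : ℝ) * Δx)) = w 1 := by simp [hw]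
  have hsum : ∑ j ∈ Icc 1 M, u j ^ 2 * (D (j + 1) * w (j + 1) - D j * w j) =
      ∑ j ∈ Icc 1 M, u j ^ 2 * (D (j + 1) * Real.exp (-μ * Δx) - D j) * w j :=
    sum_congr rfl fun j _ => by rw [hw_succ]; ring
  rw [sum_mul_sq_pred_sub_sq_mul_eq, hsum, hu, hw_one, hw_last]
  ring

/-- Weighted summation-by-parts inequality for the upwind update
(derivation of (1.23) in the paper), with `x_j = j·Δx`, `Δx = 1/M`, `x_0 = 0`,
`x_M = 1`, and the ghost value `D_{M+1} := D_M`. -/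
theorem weighted_summation_by_parts_upwind
    (M : ℕ) (hM : 2 ≤ M)
    (Δx μ κ : ℝ) (hΔx : Δx = 1 / M) (hμ : 0 < μ)
    (u D v : ℕ → ℝ)
    (hD : ∀ j, 1 ≤ j → j ≤ M → 0 ≤ D j ∧ D j ≤ 1)
    (hu : u 0 = κ * u M)
    (hDM : D (M+1) = D M)
    (hv : ∀ j, 1 ≤ j → j ≤ M → v j = (1 - D j) * u j + D j * u (j-1)) :
    ∑ j ∈ Finset.Icc 1 M, ((v j) ^ 2 - (u j) ^ 2) * Real.exp (-μ * ((j : ℝ) * Δx)) ≤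
      ∑ j ∈ Finset.Icc 1 M,
        (u j) ^ 2 * (D (j+1) * Real.exp (-μ * Δx) - D j) * Real.exp (-μ * ((j : ℝ) * Δx)) +
      (D 1 * κ ^ 2 * Real.exp (-μ * ((1 : ℝ) * Δx)) -
        D (M+1) * Real.exp (-μ * ((M : ℝ) * Δx + Δx))) * (u M) ^ 2 :=
  weighted_summation_by_parts_upwind_general M Δx μ κ u D v hD hu hv
end
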